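/- arXiv:1103.3638 — 7 statements merged into one kernel-verified Lean document; each statement's English description precedes it below -/
import Mathlib

section
/- If A₁ ≤ B and A₂ ≤ B are self-sufficient substructures of a finite L_f-structure B, then A₁ ∩ A₂ ≤ B. -/
open Classical

/-- A relational structure for a language with relation symbols indexed by `I`,
where `R_i` has arity `ar i`, over a universe `U`.  The carrier may be infinite. -/
structure BigFS (I : Type) (ar : I → ℕ) (U : Type) where
  carrier : Set U
  rels : Set ((i : I) × (Fin (ar i) → U))
  mem_carrier : ∀ r ∈ rels, ∀ k, r.2 k ∈ carrier

namespace BigFS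

variable {I U : Type} {ar : I → ℕ}

/-- The relation instances of `M` all of whose entries lie in `S`
(the relations of the induced substructure on `S`). -/
def relsIn (M : BigFS I ar U) (S : Set U) : Set ((i : I) × (Fin (ar i) → U)) :=
  {r ∈ M.rels | ∀ k, r.2 k ∈ S}

/-- The predimension `δ(S) = |S| - Σ_i α_i |R_i^S|` of the induced substructure of `M`
on the finite set `S` (with weights `α`). -/
noncomputable def bdelta (α : I → ℕ) (M : BigFS I ar U) (S : Finset U) : ℤ :=
  (S.card : ℤ) - ∑ᶠ r ∈ M.relsIn ↑S, (α r.1 : ℤ)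

/-- `M ∈ 𝒞̄_f`: every finite substructure has finitely many relation instances and
nonnegative predimension. -/
def inCbar (α : I → ℕ) (M : BigFS I ar U) : Prop :=
  ∀ S : Finset U, ↑S ⊆ M.carrier → (M.relsIn ↑S).Finite ∧ 0 ≤ bdelta α M S

/-- The dimension `d_M(S) = min { δ(T) : S ⊆ T ⊆ M finite }`. -/
noncomputable def dim (α : I → ℕ) (M : BigFS I ar U) (S : Finset U) : ℤ :=
  sInf {z : ℤ | ∃ T : Finset U, S ⊆ T ∧ ↑T ⊆ M.carrier ∧ bdelta α M T = z}

/-- A finite subset `S` is self-sufficient in `M`: `δ(S) ≤ δ(T)` for all finite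
`S ⊆ T ⊆ M`. -/
def ssIn (α : I → ℕ) (M : BigFS I ar U) (S : Finset U) : Prop :=
  ↑S ⊆ M.carrier ∧ ∀ T : Finset U, S ⊆ T → ↑T ⊆ M.carrier → bdelta α M S ≤ bdelta α M T

/-- A (possibly infinite) subset `Z` is self-sufficient in `M`:
`δ(Z ∩ T) ≤ δ(T)` for every finite substructure `T` of `M`. -/
def ssSet (α : I → ℕ) (M : BigFS I ar U) (Z : Set U) : Prop :=
  Z ⊆ M.carrier ∧ ∀ T : Finset U, ↑T ⊆ M.carrier →
    bdelta α M (T.filter (fun x => x ∈ Z)) ≤ bdelta α M T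

/-- The induced substructure of `M` on the set `Z`. -/
def inducedBig (M : BigFS I ar U) (Z : Set U) : BigFS I ar U :=
  ⟨M.carrier ∩ Z, M.relsIn Z, fun r hr k => ⟨M.mem_carrier r hr.1 k, hr.2 k⟩⟩

/-- An embedding of `B` into `M` (as `L_f`-structures): injective on the carrier,
mapping into the carrier, preserving and reflecting all relations. -/
def IsEmb {V : Type} (B : BigFS I ar U) (M : BigFS I ar V) (g : U → V) : Prop :=
  Set.InjOn g B.carrier ∧ g '' B.carrier ⊆ M.carrier ∧
  ∀ r : (i : I) × (Fin (ar i) → U), (∀ k, r.2 k ∈ B.carrier) →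
    (r ∈ B.rels ↔ (⟨r.1, g ∘ r.2⟩ : (i : I) × (Fin (ar i) → V)) ∈ M.rels)

/-- `M` is a (countable) generic structure for `(𝒞_f, ≤)`: all finite substructures
lie in `𝒞_f` and `M` has the extension property: whenever `Z ≤ M`, `Z ≤ B ∈ 𝒞_f`
(with the same induced structure on `Z`), `B` embeds into `M` over `Z` with
self-sufficient image. -/
def IsGeneric (α : I → ℕ) (M : BigFS I ar U) : Prop :=
  M.carrier.Countable ∧ inCbar α M ∧
  ∀ B : BigFS I ar U, B.carrier.Finite → inCbar α B →
  ∀ Z : Set U, Z ⊆ B.carrier → ssSet α B Z → ssSet α M Z →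
    inducedBig B Z = inducedBig M Z →
    ∃ g : U → U, IsEmb B M g ∧ (∀ a ∈ Z, g a = a) ∧ ssSet α M (g '' B.carrier)

/-- The `d`-closure of a finite set `A` in `M`:
`{c ∈ M : d(A ∪ {c}) = d(A)}`. -/
noncomputable def cld (α : I → ℕ) (M : BigFS I ar U) (A : Finset U) : Set U :=
  {c | c ∈ M.carrier ∧ dim α M (insert c A) = dim α M A}

end BigFS

open BigFS

lemma relsIn_inter_eq {I U : Type} {ar : I → ℕ} (C : BigFS I ar U) (S T : Set U) :
    C.relsIn (S ∩ T) = C.relsIn S ∩ C.relsIn T := by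
  ext r
  simp only [relsIn, Set.mem_setOf_eq, Set.mem_inter_iff]
  constructor
  · rintro ⟨h, hk⟩; exact ⟨⟨h, fun k => (hk k).1⟩, h, fun k => (hk k).2⟩
  · rintro ⟨⟨h, h1⟩, _, h2⟩; exact ⟨h, fun k => ⟨h1 k, h2 k⟩⟩

lemma bdelta_submod {I U : Type} {ar : I → ℕ} (α : I → ℕ) (C : BigFS I ar U)
    (hfin : ∀ S : Finset U, ↑S ⊆ C.carrier → (C.relsIn ↑S).Finite)
    (S T : Finset U) (hS : ↑S ⊆ C.carrier) (hT : ↑T ⊆ C.carrier) :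
    bdelta α C (S ∪ T) + bdelta α C (S ∩ T) ≤ bdelta α C S + bdelta α C T := by
  have hSTc : ↑(S ∪ T) ⊆ C.carrier := by
    push_cast; exact Set.union_subset hS hT
  have hIc : ↑(S ∩ T) ⊆ C.carrier := by
    intro x hx
    simp only [Finset.coe_inter, Set.mem_inter_iff] at hx
    exact hS hx.1
  have hfS := hfin S hS
  have hfT := hfin T hT
  have hfU := hfin (S ∪ T) hSTc
  have hfI := hfin (S ∩ T) hIc
  set f : (i : I) × (Fin (ar i) → U) → ℤ := fun r => (α r.1 : ℤ) with hf
  have e1 : bdelta α C S = (S.card : ℤ) - ∑ r ∈ hfS.toFinset, f r := by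
    rw [bdelta, finsum_mem_eq_finite_toFinset_sum _ hfS]
  have e2 : bdelta α C T = (T.card : ℤ) - ∑ r ∈ hfT.toFinset, f r := by
    rw [bdelta, finsum_mem_eq_finite_toFinset_sum _ hfT]
  have e3 : bdelta α C (S ∪ T) = ((S ∪ T).card : ℤ) - ∑ r ∈ hfU.toFinset, f r := by
    rw [bdelta, finsum_mem_eq_finite_toFinset_sum _ hfU]
  have e4 : bdelta α C (S ∩ T) = ((S ∩ T).card : ℤ) - ∑ r ∈ hfI.toFinset, f r := by
    rw [bdelta, finsum_mem_eq_finite_toFinset_sum _ hfI]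
  have hcard : ((S ∪ T).card : ℤ) + ((S ∩ T).card : ℤ) = (S.card : ℤ) + (T.card : ℤ) := by
    have := Finset.card_union_add_card_inter S T
    exact_mod_cast congrArg (Nat.cast : ℕ → ℤ) this
  -- intersection toFinset equals intersection of toFinsets
  have hIfin : hfI.toFinset = hfS.toFinset ∩ hfT.toFinset := by
    ext r
    simp [Set.Finite.mem_toFinset, Finset.coe_inter, relsIn_inter_eq]
  have hsub : hfS.toFinset ∪ hfT.toFinset ⊆ hfU.toFinset := by
    intro r hr
    simp only [Finset.mem_union, Set.Finite.mem_toFinset] at hr ⊢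
    rcases hr with hr | hr
    · exact ⟨hr.1, fun k => by simp [Finset.mem_union]; exact Or.inl (hr.2 k)⟩
    · exact ⟨hr.1, fun k => by simp [Finset.mem_union]; exact Or.inr (hr.2 k)⟩
  have hsum1 : ∑ r ∈ hfS.toFinset ∪ hfT.toFinset, f r ≤ ∑ r ∈ hfU.toFinset, f r := by
    apply Finset.sum_le_sum_of_subset_of_nonneg hsub
    intro r _ _; positivity
  have hsum2 : ∑ r ∈ hfS.toFinset ∪ hfT.toFinset, f r + ∑ r ∈ hfS.toFinset ∩ hfT.toFinset, f r
      = ∑ r ∈ hfS.toFinset, f r + ∑ r ∈ hfT.toFinset, f r :=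
    Finset.sum_union_inter
  rw [e1, e2, e3, e4, hIfin]
  linarith

/-- if `A₁ ≤ B` and `A₂ ≤ B`, then `A₁ ∩ A₂ ≤ B`,
for finite substructures of an ambient structure `C` with `B` induced on `V`. -/
theorem selfSufficient_inter {I U : Type} {ar : I → ℕ} (α : I → ℕ)
    (hα : ∀ i, 0 < α i) (C : BigFS I ar U)
    (hfin : ∀ S : Finset U, ↑S ⊆ C.carrier → (C.relsIn ↑S).Finite)
    (A₁ A₂ V : Finset U) (hA₁ : A₁ ⊆ V) (hA₂ : A₂ ⊆ V) (hV : ↑V ⊆ C.carrier)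
    (h1 : ∀ X : Finset U, A₁ ⊆ X → X ⊆ V → bdelta α C A₁ ≤ bdelta α C X)
    (h2 : ∀ X : Finset U, A₂ ⊆ X → X ⊆ V → bdelta α C A₂ ≤ bdelta α C X) :
    ∀ X : Finset U, A₁ ∩ A₂ ⊆ X → X ⊆ V → bdelta α C (A₁ ∩ A₂) ≤ bdelta α C X := by
  intro X hX hXV
  have hXc : ↑X ⊆ C.carrier := fun x hx => hV (hXV hx)
  have hA₂c : ↑A₂ ⊆ C.carrier := fun x hx => hV (hA₂ hx)
  have hA₁c : ↑A₁ ⊆ C.carrier := fun x hx => hV (hA₁ hx)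
  -- Step 1: δ(A₂ ∩ X) ≤ δ(X)
  have hsub1 := bdelta_submod α C hfin A₂ X hA₂c hXc
  have hU1 : A₂ ∪ X ⊆ V := Finset.union_subset hA₂ hXV
  have h2' := h2 (A₂ ∪ X) Finset.subset_union_left hU1
  have step1 : bdelta α C (A₂ ∩ X) ≤ bdelta α C X := by linarith
  -- Step 2: δ(A₁ ∩ A₂) ≤ δ(A₂ ∩ X)
  have hA₂Xc : ↑(A₂ ∩ X) ⊆ C.carrier := fun x hx => by
    simp only [Finset.coe_inter, Set.mem_inter_iff] at hx
    exact hA₂c hx.1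
  have hsub2 := bdelta_submod α C hfin A₁ (A₂ ∩ X) hA₁c hA₂Xc
  have hinter : A₁ ∩ (A₂ ∩ X) = A₁ ∩ A₂ := by
    ext x
    simp only [Finset.mem_inter]
    constructor
    · rintro ⟨h1, h2, _⟩; exact ⟨h1, h2⟩
    · rintro ⟨h1, h2⟩; exact ⟨h1, h2, hX (Finset.mem_inter.mpr ⟨h1, h2⟩)⟩
  rw [hinter] at hsub2
  have hU2 : A₁ ∪ (A₂ ∩ X) ⊆ V :=
    Finset.union_subset hA₁ (fun x hx => hA₂ (Finset.mem_inter.mp hx).1)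
  have h1' := h1 (A₁ ∪ (A₂ ∩ X)) Finset.subset_union_left hU2
  linarith
end

section
/- Free amalgamation property: let A₀ ⊆ A₁ ∈ 𝒞_f, A₀ ≤ A₂ ∈ 𝒞_f with A₁ ∩ A₂ = A₀, and let F = A₁ ⨿_{A₀} A₂ be the structure on A₁ ∪ A₂ whose only relations are those from A₁ and A₂. Then F ∈ 𝒞_f and A₁ ≤ F. -/
open Classical

open BigFS

lemma aux_finsum_union_inter {X M : Type*} [AddCommMonoid M] {s t : Set X}
    (hs : s.Finite) (ht : t.Finite) (f : X → M) :
    (∑ᶠ i ∈ s ∪ t, f i) + (∑ᶠ i ∈ s ∩ t, f i) = (∑ᶠ i ∈ s, f i) + (∑ᶠ i ∈ t, f i) := by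
  classical
  rw [← hs.coe_toFinset, ← ht.coe_toFinset, ← Finset.coe_union, ← Finset.coe_inter,
    finsum_mem_coe_finset, finsum_mem_coe_finset, finsum_mem_coe_finset, finsum_mem_coe_finset,
    Finset.sum_union_inter]

/-- free amalgamation: if `A₀ ⊆ A₁ ∈ 𝒞_f`, `A₀ ≤ A₂ ∈ 𝒞_f`,
`A₁ ∩ A₂ = A₀` (same induced structure on the intersection), and `F` is the free
amalgam on `A₁ ∪ A₂`, then `F ∈ 𝒞_f` and `A₁ ≤ F`. -/
theorem free_amalgamation {I U : Type} {ar : I → ℕ} (α : I → ℕ)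
    (hα : ∀ i, 0 < α i) (A₁ A₂ : BigFS I ar U)
    (h₁fin : A₁.carrier.Finite) (h₂fin : A₂.carrier.Finite)
    (h₁ : inCbar α A₁) (h₂ : inCbar α A₂)
    (hsame : A₁.relsIn (A₁.carrier ∩ A₂.carrier) = A₂.relsIn (A₁.carrier ∩ A₂.carrier))
    (hss : ssSet α A₂ (A₁.carrier ∩ A₂.carrier))
    (F : BigFS I ar U) (hFc : F.carrier = A₁.carrier ∪ A₂.carrier)
    (hFr : F.rels = A₁.rels ∪ A₂.rels) :
    inCbar α F ∧ ssSet α F A₁.carrier := by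
  classical
  set C₀ : Set U := A₁.carrier ∩ A₂.carrier with hC₀
  -- decomposition of relations
  have hrels : ∀ S : Finset U, ↑S ⊆ F.carrier →
      F.relsIn ↑S = A₁.relsIn ↑(S.filter (fun x => x ∈ A₁.carrier))
        ∪ A₂.relsIn ↑(S.filter (fun x => x ∈ A₂.carrier)) := by
    intro S hS
    ext r
    simp only [relsIn, Set.mem_setOf_eq, Set.mem_union, hFr, Finset.coe_filter,
      Finset.mem_coe]
    constructor
    · rintro ⟨hr | hr, hk⟩
      · exact Or.inl ⟨hr, fun k => ⟨hk k, A₁.mem_carrier r hr k⟩⟩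
      · exact Or.inr ⟨hr, fun k => ⟨hk k, A₂.mem_carrier r hr k⟩⟩
    · rintro (⟨hr, hk⟩ | ⟨hr, hk⟩)
      · exact ⟨Or.inl hr, fun k => (hk k).1⟩
      · exact ⟨Or.inr hr, fun k => (hk k).1⟩
  have hinter : ∀ S : Finset U,
      A₁.relsIn ↑(S.filter (fun x => x ∈ A₁.carrier))
        ∩ A₂.relsIn ↑(S.filter (fun x => x ∈ A₂.carrier))
      = A₂.relsIn ↑(S.filter (fun x => x ∈ C₀)) := by
    intro S
    ext r
    simp only [relsIn, Set.mem_setOf_eq, Set.mem_inter_iff, Finset.coe_filter,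
      Finset.mem_coe, hC₀]
    constructor
    · rintro ⟨⟨hr1, hk1⟩, ⟨hr2, hk2⟩⟩
      exact ⟨hr2, fun k => ⟨(hk1 k).1, (hk1 k).2, (hk2 k).2⟩⟩
    · rintro ⟨hr, hk⟩
      have hr1 : r ∈ A₁.rels := by
        have : r ∈ A₂.relsIn (A₁.carrier ∩ A₂.carrier) :=
          ⟨hr, fun k => (hk k).2⟩
        rw [← hsame] at this
        exact this.1
      exact ⟨⟨hr1, fun k => ⟨(hk k).1, (hk k).2.1⟩⟩, ⟨hr, fun k => ⟨(hk k).1, (hk k).2.2⟩⟩⟩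
  -- the key predimension decomposition
  have key : ∀ S : Finset U, ↑S ⊆ F.carrier →
      bdelta α F S = bdelta α A₁ (S.filter (fun x => x ∈ A₁.carrier))
        + bdelta α A₂ (S.filter (fun x => x ∈ A₂.carrier))
        - bdelta α A₂ (S.filter (fun x => x ∈ C₀)) := by
    intro S hS
    set S₁ := S.filter (fun x => x ∈ A₁.carrier) with hS₁
    set S₂ := S.filter (fun x => x ∈ A₂.carrier) with hS₂
    set S₀ := S.filter (fun x => x ∈ C₀) with hS₀
    have hS1c : (↑S₁ : Set U) ⊆ A₁.carrier := by
      intro x hx; simp only [hS₁, Finset.coe_filter, Set.mem_setOf_eq] at hx; exact hx.2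
    have hS2c : (↑S₂ : Set U) ⊆ A₂.carrier := by
      intro x hx; simp only [hS₂, Finset.coe_filter, Set.mem_setOf_eq] at hx; exact hx.2
    have hU : S₁ ∪ S₂ = S := by
      ext x
      simp only [hS₁, hS₂, Finset.mem_union, Finset.mem_filter]
      constructor
      · rintro (⟨h, _⟩ | ⟨h, _⟩) <;> exact h
      · intro hx
        have := hS hx
        rw [hFc] at this
        rcases this with h | h
        · exact Or.inl ⟨hx, h⟩
        · exact Or.inr ⟨hx, h⟩
    have hI : S₁ ∩ S₂ = S₀ := by
      ext x
      simp only [hS₁, hS₂, hS₀, hC₀, Finset.mem_inter, Finset.mem_filter, Set.mem_inter_iff]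
      tauto
    have hcard : (S.card : ℤ) + (S₀.card : ℤ) = (S₁.card : ℤ) + (S₂.card : ℤ) := by
      have := Finset.card_union_add_card_inter S₁ S₂
      rw [hU, hI] at this
      exact_mod_cast this
    have hfin1 : (A₁.relsIn ↑S₁).Finite := (h₁ S₁ hS1c).1
    have hfin2 : (A₂.relsIn ↑S₂).Finite := (h₂ S₂ hS2c).1
    have hsum := aux_finsum_union_inter hfin1 hfin2
      (fun r : (i : I) × (Fin (ar i) → U) => (α r.1 : ℤ))
    rw [hinter S] at hsum
    simp only [bdelta, hrels S hS]
    linarith [hsum]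
  -- filter stability used with hss
  have hsub1 : ∀ S : Finset U,
      (↑(S.filter (fun x => x ∈ A₁.carrier)) : Set U) ⊆ A₁.carrier := by
    intro S x hx
    simp only [Finset.coe_filter, Set.mem_setOf_eq] at hx
    exact hx.2
  have hsub2 : ∀ S : Finset U,
      (↑(S.filter (fun x => x ∈ A₂.carrier)) : Set U) ⊆ A₂.carrier := by
    intro S x hx
    simp only [Finset.coe_filter, Set.mem_setOf_eq] at hx
    exact hx.2
  have hfilt : ∀ S : Finset U,
      (S.filter (fun x => x ∈ A₂.carrier)).filter (fun x => x ∈ C₀)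
        = S.filter (fun x => x ∈ C₀) := by
    intro S
    ext x
    simp only [hC₀, Finset.mem_filter, Set.mem_inter_iff]
    tauto
  have hss2 : ∀ S : Finset U,
      bdelta α A₂ (S.filter (fun x => x ∈ C₀))
        ≤ bdelta α A₂ (S.filter (fun x => x ∈ A₂.carrier)) := by
    intro S
    have h := hss.2 (S.filter (fun x => x ∈ A₂.carrier)) (hsub2 S)
    convert h using 2
    ext x
    simp only [hC₀, Finset.mem_filter, Set.mem_inter_iff]
    tauto
  constructor
  · intro S hS
    constructor
    · rw [hrels S hS]
      exact ((h₁ _ (hsub1 S)).1).union ((h₂ _ (hsub2 S)).1)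
    · rw [key S hS]
      have ha := (h₁ (S.filter (fun x => x ∈ A₁.carrier)) (hsub1 S)).2
      have hb := hss2 S
      linarith
  · constructor
    · rw [hFc]
      exact Set.subset_union_left
    · intro T hT
      set T₁ := T.filter (fun x => x ∈ A₁.carrier) with hT₁
      have hT₁F : (↑T₁ : Set U) ⊆ F.carrier := by
        intro x hx
        have := hsub1 T hx
        rw [hFc]
        exact Or.inl this
      have e1 : T₁.filter (fun x => x ∈ A₁.carrier) = T₁ := by
        ext x
        simp only [hT₁, Finset.mem_filter]
        tauto
      have e2 : T₁.filter (fun x => x ∈ A₂.carrier) = T₁.filter (fun x => x ∈ C₀) := by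
        ext x
        simp only [hT₁, hC₀, Finset.mem_filter, Set.mem_inter_iff]
        tauto
      have hFT₁ : bdelta α F T₁ = bdelta α A₁ T₁ := by
        rw [key T₁ hT₁F, e1, e2]
        ring
      rw [hFT₁, key T hT]
      have hb := hss2 T
      linarith
end

section
/- For any structure M all of whose finite substructures lie in 𝒞_f and any finite A ⊆ M, there is a unique smallest finite set cl_M(A) with A ⊆ cl_M(A) ≤ M (the self-sufficient closure of A in M). -/
open Classical

open BigFS

section Aux
variable {I U : Type} {ar : I → ℕ}

lemma relsIn_mono' (M : BigFS I ar U) {S T : Set U} (h : S ⊆ T) :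
    M.relsIn S ⊆ M.relsIn T := fun r hr => ⟨hr.1, fun k => h (hr.2 k)⟩

lemma relsIn_inter' (M : BigFS I ar U) (C D : Finset U) :
    M.relsIn ↑(C ∩ D) = M.relsIn ↑C ∩ M.relsIn ↑D := by
  ext r
  simp only [BigFS.relsIn, Set.mem_setOf_eq, Set.mem_inter_iff, Finset.coe_inter,
    Finset.mem_coe, Finset.mem_inter]
  constructor
  · rintro ⟨h1, h2⟩
    exact ⟨⟨h1, fun k => ((h2 k).1 : _)⟩, ⟨h1, fun k => (h2 k).2⟩⟩
  · rintro ⟨⟨h1, h2⟩, ⟨_, h3⟩⟩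
    exact ⟨h1, fun k => ⟨h2 k, h3 k⟩⟩

lemma bdelta_submod_s4 (α : I → ℕ) (M : BigFS I ar U) (hM : inCbar α M)
    (C D : Finset U) (hC : ↑C ⊆ M.carrier) (hD : ↑D ⊆ M.carrier) :
    bdelta α M (C ∪ D) + bdelta α M (C ∩ D) ≤ bdelta α M C + bdelta α M D := by
  have hCD : (↑(C ∪ D) : Set U) ⊆ M.carrier := by
    rw [Finset.coe_union]; exact Set.union_subset hC hD
  have hU : (M.relsIn ↑(C ∪ D)).Finite := (hM (C ∪ D) hCD).1
  have hsubC : M.relsIn ↑C ⊆ M.relsIn ↑(C ∪ D) :=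
    relsIn_mono' M (by rw [Finset.coe_union]; exact Set.subset_union_left)
  have hsubD : M.relsIn ↑D ⊆ M.relsIn ↑(C ∪ D) :=
    relsIn_mono' M (by rw [Finset.coe_union]; exact Set.subset_union_right)
  have hfC : (M.relsIn ↑C).Finite := hU.subset hsubC
  have hfD : (M.relsIn ↑D).Finite := hU.subset hsubD
  have hfI : (M.relsIn ↑(C ∩ D)).Finite := by
    rw [relsIn_inter']; exact hfC.inter_of_left _
  set f : ((i : I) × (Fin (ar i) → U)) → ℤ := fun r => (α r.1 : ℤ) with hf
  have eU := finsum_mem_eq_finite_toFinset_sum f hU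
  have eC := finsum_mem_eq_finite_toFinset_sum f hfC
  have eD := finsum_mem_eq_finite_toFinset_sum f hfD
  have eI := finsum_mem_eq_finite_toFinset_sum f hfI
  have hIfin : hfI.toFinset = hfC.toFinset ∩ hfD.toFinset := by
    ext r
    simp only [Set.Finite.mem_toFinset, Finset.mem_inter, relsIn_inter' M C D,
      Set.mem_inter_iff]
  have hUsub : hfC.toFinset ∪ hfD.toFinset ⊆ hU.toFinset := by
    intro r hr
    rw [Finset.mem_union] at hr
    rw [Set.Finite.mem_toFinset]
    rcases hr with hr | hr
    · exact hsubC (hfC.mem_toFinset.1 hr)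
    · exact hsubD (hfD.mem_toFinset.1 hr)
  have hsum1 : ∑ r ∈ hfC.toFinset ∪ hfD.toFinset, f r ≤ ∑ r ∈ hU.toFinset, f r := by
    apply Finset.sum_le_sum_of_subset_of_nonneg hUsub
    intro r _ _; exact Int.ofNat_nonneg _
  have hsum2 : ∑ r ∈ hfC.toFinset ∪ hfD.toFinset, f r
      + ∑ r ∈ hfC.toFinset ∩ hfD.toFinset, f r
      = ∑ r ∈ hfC.toFinset, f r + ∑ r ∈ hfD.toFinset, f r :=
    Finset.sum_union_inter
  have hcard : ((C ∪ D).card : ℤ) + ((C ∩ D).card : ℤ) = (C.card : ℤ) + (D.card : ℤ) := by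
    have := Finset.card_union_add_card_inter C D
    exact_mod_cast congrArg (Nat.cast : ℕ → ℤ) this
  unfold bdelta
  rw [eU, eC, eD, eI, hIfin]
  linarith

end Aux
/-- existence and uniqueness of the self-sufficient closure: for
`M ∈ 𝒞̄_f` and finite `A ⊆ M` there is a unique smallest finite set
`cl_M(A)` with `A ⊆ cl_M(A) ≤ M`. -/
theorem selfSufficient_closure {I U : Type} {ar : I → ℕ} (α : I → ℕ)
    (hα : ∀ i, 0 < α i) (M : BigFS I ar U) (hM : inCbar α M)
    (A : Finset U) (hA : ↑A ⊆ M.carrier) :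
    ∃! C : Finset U, (A ⊆ C ∧ ssIn α M C) ∧
      ∀ D : Finset U, A ⊆ D → ssIn α M D → C ⊆ D := by
  -- the set of attainable predimensions over A
  have hP : ∃ m, (∃ T : Finset U, A ⊆ T ∧ ↑T ⊆ M.carrier ∧ bdelta α M T = m) ∧
      ∀ z, (∃ T : Finset U, A ⊆ T ∧ ↑T ⊆ M.carrier ∧ bdelta α M T = z) → m ≤ z := by
    refine Int.exists_least_of_bdd ⟨0, ?_⟩ ⟨bdelta α M A, A, Finset.Subset.refl A, hA, rfl⟩
    rintro z ⟨T, _, hT, rfl⟩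
    exact (hM T hT).2
  obtain ⟨m, ⟨T0, hT0A, hT0M, hT0d⟩, hmin⟩ := hP
  -- among minimizers, pick one of minimal cardinality
  have hPn : ∃ n, ∃ T : Finset U, T.card = n ∧ A ⊆ T ∧ ↑T ⊆ M.carrier ∧ bdelta α M T = m :=
    ⟨T0.card, T0, rfl, hT0A, hT0M, hT0d⟩
  classical
  obtain ⟨C, hCcard, hCA, hCM, hCd⟩ := Nat.find_spec hPn
  have hCmin : ∀ T : Finset U, A ⊆ T → ↑T ⊆ M.carrier → bdelta α M T = m →
      C.card ≤ T.card := by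
    intro T h1 h2 h3
    rw [hCcard]
    exact Nat.find_min' hPn ⟨T, rfl, h1, h2, h3⟩
  have hCss : ssIn α M C := by
    refine ⟨hCM, fun T hCT hTM => ?_⟩
    rw [hCd]
    exact hmin _ ⟨T, hCA.trans hCT, hTM, rfl⟩
  have hleast : ∀ D : Finset U, A ⊆ D → ssIn α M D → C ⊆ D := by
    intro D hAD hDss
    have hDM := hDss.1
    have hCDM : (↑(C ∪ D) : Set U) ⊆ M.carrier := by
      rw [Finset.coe_union]; exact Set.union_subset hCM hDM
    have h1 : bdelta α M D ≤ bdelta α M (C ∪ D) :=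
      hDss.2 (C ∪ D) Finset.subset_union_right hCDM
    have h2 := bdelta_submod_s4 α M hM C D hCM hDM
    have hICM : (↑(C ∩ D) : Set U) ⊆ M.carrier := by
      rw [Finset.coe_inter]; exact (Set.inter_subset_left).trans hCM
    have hAI : A ⊆ C ∩ D := Finset.subset_inter hCA hAD
    have h3 : m ≤ bdelta α M (C ∩ D) := hmin _ ⟨C ∩ D, hAI, hICM, rfl⟩
    have h4 : bdelta α M (C ∩ D) = m := le_antisymm (by linarith [hCd]) h3
    have h5 : C.card ≤ (C ∩ D).card := hCmin _ hAI hICM h4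
    have h6 : C ∩ D = C :=
      Finset.eq_of_subset_of_card_le Finset.inter_subset_left (by omega)
    rw [← h6]
    exact Finset.inter_subset_right
  refine ⟨C, ⟨⟨hCA, hCss⟩, hleast⟩, ?_⟩
  rintro C' ⟨⟨hC'A, hC'ss⟩, hC'least⟩
  exact Finset.Subset.antisymm (hC'least C hCA hCss) (hleast C' hC'A hC'ss)
end

section
/- First Changing Lemma: let M ∈ 𝒞̄_f, A ≤ M, and let A' ∈ 𝒞̄_f be a structure with the same underlying set as A. Let M' be obtained from M by replacing A by A', i.e., for each i, R_i^{M'} = (R_i^M ∖ R_i^A) ∪ R_i^{A'}. Then A' ≤ M' and M' ∈ 𝒞̄_f. -/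
open Classical

open BigFS
/-- First Changing Lemma: if `M ∈ 𝒞̄_f`, `A ≤ M` (underlying set `Z`),
`A' ∈ 𝒞̄_f` has the same underlying set `Z`, and `M'` is obtained from `M` by
replacing the structure on `Z` by `A'`, then `A' ≤ M' ∈ 𝒞̄_f`. -/
theorem first_changing_lemma {I U : Type} {ar : I → ℕ} (α : I → ℕ)
    (hα : ∀ i, 0 < α i) (M : BigFS I ar U) (hM : inCbar α M)
    (Z : Set U) (hZ : ssSet α M Z)
    (A' : BigFS I ar U) (hA'c : A'.carrier = Z) (hA' : inCbar α A')
    (M' : BigFS I ar U) (hc : M'.carrier = M.carrier)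
    (hr : M'.rels = (M.rels \ M.relsIn Z) ∪ A'.rels) :
    inCbar α M' ∧ ssSet α M' Z := by
  -- coercion of filtered finset
  have hcoe : ∀ T : Finset U, (↑(T.filter (fun x => x ∈ Z)) : Set U) = ↑T ∩ Z := by
    intro T; ext x; simp [Finset.mem_filter]
  -- structure of M'.relsIn T
  have hrels : ∀ T : Finset U,
      M'.relsIn ↑T = (M.relsIn ↑T \ M.relsIn (↑T ∩ Z)) ∪ A'.relsIn (↑T ∩ Z) := by
    intro T
    ext r
    simp only [relsIn, hr, Set.mem_setOf_eq, Set.mem_union, Set.mem_diff,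
      Set.mem_inter_iff]
    constructor
    · rintro ⟨h1 | h2, hT⟩
      · left
        refine ⟨⟨h1.1, hT⟩, ?_⟩
        rintro ⟨-, hz⟩
        exact h1.2 ⟨h1.1, fun k => (hz k).2⟩
      · right
        have hz : ∀ k, r.2 k ∈ Z := by
          intro k; rw [← hA'c]; exact A'.mem_carrier r h2 k
        exact ⟨h2, fun k => ⟨hT k, hz k⟩⟩
    · rintro (⟨⟨⟨hrM, hT⟩, hnz⟩⟩ | ⟨hrA, hTZ⟩)
      · refine ⟨Or.inl ⟨hrM, ?_⟩, hT⟩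
        intro hZmem
        exact hnz ⟨hrM, fun k => ⟨hT k, hZmem.2 k⟩⟩
      · exact ⟨Or.inr hrA, fun k => (hTZ k).1⟩
  -- the key predimension formula
  have hdelta : ∀ T : Finset U, ↑T ⊆ M.carrier →
      bdelta α M' T = bdelta α M T - bdelta α M (T.filter (fun x => x ∈ Z))
        + bdelta α A' (T.filter (fun x => x ∈ Z)) := by
    intro T hT
    set TZ := T.filter (fun x => x ∈ Z) with hTZdef
    have hTZsub : TZ ⊆ T := Finset.filter_subset _ _
    have hTZM : (↑TZ : Set U) ⊆ M.carrier := fun x hx => hT (hTZsub hx)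
    have hTZA : (↑TZ : Set U) ⊆ A'.carrier := by
      rw [hA'c, hcoe]; exact Set.inter_subset_right
    have hfinT : (M.relsIn ↑T).Finite := (hM T hT).1
    have hfinTZ : (M.relsIn (↑T ∩ Z)).Finite := by
      rw [← hcoe]; exact (hM TZ hTZM).1
    have hfinA : (A'.relsIn (↑T ∩ Z)).Finite := by
      rw [← hcoe]; exact (hA' TZ hTZA).1
    have hsub : M.relsIn (↑T ∩ Z) ⊆ M.relsIn ↑T :=
      fun r hr' => ⟨hr'.1, fun k => (hr'.2 k).1⟩
    have hdisj : Disjoint (M.relsIn ↑T \ M.relsIn (↑T ∩ Z)) (A'.relsIn (↑T ∩ Z)) := by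
      rw [Set.disjoint_left]
      rintro r ⟨hrM, hnz⟩ hrA
      exact hnz ⟨hrM.1, hrA.2⟩
    have hsum1 : ∑ᶠ r ∈ M'.relsIn ↑T, (α r.1 : ℤ)
        = (∑ᶠ r ∈ M.relsIn ↑T \ M.relsIn (↑T ∩ Z), (α r.1 : ℤ))
          + ∑ᶠ r ∈ A'.relsIn (↑T ∩ Z), (α r.1 : ℤ) := by
      rw [hrels T]
      exact finsum_mem_union hdisj hfinT.diff hfinA
    have hsum2 : ∑ᶠ r ∈ M.relsIn ↑T, (α r.1 : ℤ)
        = (∑ᶠ r ∈ M.relsIn ↑T \ M.relsIn (↑T ∩ Z), (α r.1 : ℤ))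
          + ∑ᶠ r ∈ M.relsIn (↑T ∩ Z), (α r.1 : ℤ) := by
      conv_lhs => rw [← Set.diff_union_of_subset hsub]
      exact finsum_mem_union Set.disjoint_sdiff_left hfinT.diff hfinTZ
    simp only [bdelta, hTZdef, hcoe]
    rw [hsum1]
    have := hsum2
    linarith
  have hA'delta : ∀ T : Finset U, ↑T ⊆ M.carrier →
      bdelta α M' (T.filter (fun x => x ∈ Z)) = bdelta α A' (T.filter (fun x => x ∈ Z)) := by
    intro T hT
    set TZ := T.filter (fun x => x ∈ Z) with hTZdef
    have hTZM : (↑TZ : Set U) ⊆ M.carrier := fun x hx => hT (Finset.filter_subset _ _ hx)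
    have h1 := hdelta TZ hTZM
    have h2 : TZ.filter (fun x => x ∈ Z) = TZ := by
      simp [hTZdef, Finset.filter_filter]
    rw [h2] at h1
    linarith
  constructor
  · -- inCbar α M'
    intro T hT
    rw [hc] at hT
    constructor
    · rw [hrels T]
      have hTZM : (↑(T.filter (fun x => x ∈ Z)) : Set U) ⊆ M.carrier :=
        fun x hx => hT (Finset.filter_subset _ _ hx)
      have hTZA : (↑(T.filter (fun x => x ∈ Z)) : Set U) ⊆ A'.carrier := by
        rw [hA'c, hcoe]; exact Set.inter_subset_right
      refine Set.Finite.union (Set.Finite.diff (hM T hT).1) ?_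
      rw [← hcoe]
      exact (hA' _ hTZA).1
    · rw [hdelta T hT]
      have hTZA : (↑(T.filter (fun x => x ∈ Z)) : Set U) ⊆ A'.carrier := by
        rw [hA'c, hcoe]; exact Set.inter_subset_right
      have h1 := (hA' _ hTZA).2
      have h2 := hZ.2 T hT
      linarith
  · -- ssSet α M' Z
    constructor
    · rw [hc]; exact hZ.1
    · intro T hT
      rw [hc] at hT
      have h1 := hdelta T hT
      have h2 := hA'delta T hT
      have h3 := hZ.2 T hT
      linarith
end

section
/- Arity-reduction embedding: let n ≥ 3 and let M₃ be the generic model for (𝒞₃, ≤) in the language with one ternary relation. Replace each triple (a₁,a₂,a₃) ∈ R₃^{M₃} by the n-tuple (a₁,a₂,a₃,a₃,…,a₃). The resulting L_n-structure M₃^h lies in 𝒞̄_n and has the same predimension function on finite subsets as M₃; consequently PG(M₃^h) = PG(M₃), and PG(M₃) embeds into PG(M_n). -/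
open Classical

open BigFS

namespace BigFS

variable {I U : Type} {ar : I → ℕ} {α : I → ℕ} {M : BigFS I ar U}

lemma relsIn_mono {S T : Set U} (h : S ⊆ T) : M.relsIn S ⊆ M.relsIn T :=
  fun x hx => ⟨hx.1, fun k => h (hx.2 k)⟩

lemma relsIn_inter (S T : Set U) : M.relsIn (S ∩ T) = M.relsIn S ∩ M.relsIn T := by
  ext x
  constructor
  · rintro ⟨h1, h2⟩; exact ⟨⟨h1, fun k => (h2 k).1⟩, ⟨h1, fun k => (h2 k).2⟩⟩
  · rintro ⟨⟨h1, h2⟩, ⟨_, h3⟩⟩; exact ⟨h1, fun k => ⟨h2 k, h3 k⟩⟩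

lemma relsum_nonneg (A : Set ((i : I) × (Fin (ar i) → U))) :
    0 ≤ ∑ᶠ x ∈ A, ((α x.1 : ℤ)) := by
  rw [finsum_mem_def]
  exact finsum_nonneg fun x => Set.indicator_nonneg (fun y _ => by positivity) x

/-- Submodularity of the predimension. -/
lemma bdelta_submod (S T : Finset U) (hfin : (M.relsIn ↑(S ∪ T)).Finite) :
    bdelta α M (S ∪ T) + bdelta α M (S ∩ T) ≤ bdelta α M S + bdelta α M T := by
  classical
  have hS : (M.relsIn ↑S).Finite := hfin.subset (relsIn_mono (by simp [Finset.coe_union]))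
  have hT : (M.relsIn ↑T).Finite := hfin.subset (relsIn_mono (by simp [Finset.coe_union]))
  have hI : (M.relsIn ↑(S ∩ T)).Finite := hfin.subset (relsIn_mono (by
    rw [Finset.coe_inter, Finset.coe_union]
    exact Set.inter_subset_left.trans Set.subset_union_left))
  rw [bdelta, bdelta, bdelta, bdelta,
    finsum_mem_eq_finite_toFinset_sum _ hfin, finsum_mem_eq_finite_toFinset_sum _ hS,
    finsum_mem_eq_finite_toFinset_sum _ hT, finsum_mem_eq_finite_toFinset_sum _ hI]
  have hcard : (S ∪ T).card + (S ∩ T).card = S.card + T.card :=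
    Finset.card_union_add_card_inter S T
  have hinter : hI.toFinset = hS.toFinset ∩ hT.toFinset := by
    ext x; simp [Finset.coe_inter, relsIn_inter]
  have hsub : hS.toFinset ∪ hT.toFinset ⊆ hfin.toFinset := by
    intro x hx
    simp only [Finset.mem_union, Set.Finite.mem_toFinset] at hx ⊢
    rcases hx with h | h
    · exact relsIn_mono (by simp [Finset.coe_union]) h
    · exact relsIn_mono (by simp [Finset.coe_union]) h
  have hsums : ∑ x ∈ hS.toFinset, ((α x.1 : ℤ)) + ∑ x ∈ hT.toFinset, ((α x.1 : ℤ))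
      ≤ ∑ x ∈ hfin.toFinset, ((α x.1 : ℤ)) + ∑ x ∈ hI.toFinset, ((α x.1 : ℤ)) := by
    rw [← Finset.sum_union_inter, hinter]
    have := Finset.sum_le_sum_of_subset_of_nonneg hsub
      (f := fun x => ((α x.1 : ℤ))) (fun x _ _ => by positivity)
    beta_reduce at this
    linarith
  have hcard' : ((S ∪ T).card : ℤ) + ((S ∩ T).card : ℤ) = (S.card : ℤ) + (T.card : ℤ) := by
    exact_mod_cast hcard
  linarith


lemma bdelta_nonneg' {A : Finset U} (hM : inCbar α M) (hA : ↑A ⊆ M.carrier) :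
    0 ≤ bdelta α M A := (hM A hA).2

lemma dim_mem_bddBelow (hM : inCbar α M) (S : Finset U) :
    BddBelow {z : ℤ | ∃ T : Finset U, S ⊆ T ∧ ↑T ⊆ M.carrier ∧ bdelta α M T = z} := by
  refine ⟨0, ?_⟩
  rintro z ⟨T, _, hTc, rfl⟩
  exact (hM T hTc).2

lemma dim_le (hM : inCbar α M) {S T : Finset U} (hST : S ⊆ T) (hTc : ↑T ⊆ M.carrier) :
    dim α M S ≤ bdelta α M T :=
  csInf_le (dim_mem_bddBelow hM S) ⟨T, hST, hTc, rfl⟩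

lemma le_dim {S : Finset U} (hS : ↑S ⊆ M.carrier) {z : ℤ}
    (h : ∀ T : Finset U, S ⊆ T → ↑T ⊆ M.carrier → z ≤ bdelta α M T) :
    z ≤ dim α M S := by
  rw [dim]
  refine le_csInf ⟨bdelta α M S, S, le_refl S, hS, rfl⟩ ?_
  rintro y ⟨T, hST, hTc, rfl⟩
  exact h T hST hTc

lemma dim_nonneg (hM : inCbar α M) {S : Finset U} (hS : ↑S ⊆ M.carrier) :
    0 ≤ dim α M S :=
  le_dim hS fun T _ hTc => (hM T hTc).2

/-- Every finite subset of the carrier of a structure in `𝒞̄` has a finite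
self-sufficient superset realizing the dimension. -/
lemma exists_ss_closure (hM : inCbar α M) (S : Finset U) (hS : ↑S ⊆ M.carrier) :
    ∃ T : Finset U, S ⊆ T ∧ ↑T ⊆ M.carrier ∧ bdelta α M T = dim α M S ∧ ssSet α M ↑T := by
  classical
  have hne : {z : ℤ | ∃ T : Finset U, S ⊆ T ∧ ↑T ⊆ M.carrier ∧ bdelta α M T = z}.Nonempty :=
    ⟨bdelta α M S, S, le_refl S, hS, rfl⟩
  obtain ⟨T, hST, hTc, hTd⟩ := Int.csInf_mem hne (dim_mem_bddBelow hM S)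
  refine ⟨T, hST, hTc, hTd, hTc, ?_⟩
  intro W hWc
  have hsub : ↑(W ∪ T) ⊆ M.carrier := by
    rw [Finset.coe_union]; exact Set.union_subset hWc hTc
  have hmod := bdelta_submod (M := M) (α := α) W T ((hM _ hsub).1)
  have hT_le : bdelta α M T ≤ bdelta α M (W ∪ T) := by
    rw [hTd]
    exact dim_le hM (hST.trans Finset.subset_union_right) hsub
  have hgoal : bdelta α M (W ∩ T) ≤ bdelta α M W := by linarith
  convert hgoal using 2
  ext x; simp

/-- `relsIn` of an induced substructure agrees with `relsIn` of the ambient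
structure on subsets of the inducing set. -/
lemma relsIn_induced {Z X : Set U} (hX : X ⊆ Z) :
    (inducedBig M Z).relsIn X = M.relsIn X := by
  ext r
  constructor
  · rintro ⟨⟨h1, _⟩, h3⟩; exact ⟨h1, h3⟩
  · rintro ⟨h1, h2⟩; exact ⟨⟨h1, fun k => hX (h2 k)⟩, h2⟩

lemma bdelta_induced {Z : Set U} {S : Finset U} (hS : ↑S ⊆ Z) :
    bdelta α (inducedBig M Z) S = bdelta α M S := by
  rw [bdelta, bdelta, relsIn_induced hS]

lemma inducedBig_carrier {Z : Set U} (hZ : Z ⊆ M.carrier) :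
    (inducedBig M Z).carrier = Z := by
  rw [inducedBig]; exact Set.inter_eq_right.mpr hZ

/-- Transport of relation sets along an embedding. -/
lemma relsIn_bijOn {V : Type} {B : BigFS I ar U} {N : BigFS I ar V} {g : U → V}
    (hemb : IsEmb B N g) (hg : Set.InjOn g B.carrier) {X : Set U} (hX : X ⊆ B.carrier) :
    Set.BijOn (fun r : (i : I) × (Fin (ar i) → U) => (⟨r.1, g ∘ r.2⟩ : (i : I) × (Fin (ar i) → V)))
      (B.relsIn X) (N.relsIn (g '' X)) := by
  obtain ⟨hinj, himg, hrel⟩ := hemb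
  refine ⟨?_, ?_, ?_⟩
  · rintro ⟨i, s⟩ ⟨h1, h2⟩
    refine ⟨?_, fun k => ⟨s k, h2 k, rfl⟩⟩
    exact (hrel ⟨i, s⟩ (fun k => hX (h2 k))).mp h1
  · rintro ⟨i, s⟩ ⟨h1, h2⟩ ⟨i', s'⟩ ⟨h1', h2'⟩ heq
    dsimp only at heq
    injection heq with hi hs
    subst hi
    have hss : s = s' := by
      funext k
      exact hg (hX (h2 k)) (hX (h2' k)) (congrFun (eq_of_heq hs) k)
    rw [hss]
  · rintro ⟨i, t⟩ ⟨h1, h2⟩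
    choose s hs hgs using h2
    refine ⟨⟨i, s⟩, ⟨?_, hs⟩, ?_⟩
    · apply (hrel ⟨i, s⟩ (fun k => hX (hs k))).mpr
      have : g ∘ s = t := funext hgs
      simpa [this] using h1
    · exact congrArg (fun u => (⟨i, u⟩ : (i : I) × (Fin (ar i) → V))) (funext hgs)

/-- Embeddings preserve the predimension. -/
lemma bdelta_image {V : Type} {B : BigFS I ar U} {N : BigFS I ar V} {g : U → V}
    (hemb : IsEmb B N g) {S : Finset U} (hS : ↑S ⊆ B.carrier) :
    bdelta α N (S.image g) = bdelta α B S := by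
  classical
  have hinj : Set.InjOn g B.carrier := hemb.1
  have hcard : (S.image g).card = S.card :=
    Finset.card_image_of_injOn (hinj.mono hS)
  rw [bdelta, bdelta, hcard]
  congr 1
  rw [Finset.coe_image]
  exact (finsum_mem_eq_of_bijOn _ (relsIn_bijOn hemb hinj hS) (fun x _ => rfl)).symm

/-- Composition of embeddings. -/
lemma IsEmb.comp {B C N : BigFS I ar U} {g g' : U → U}
    (h1 : IsEmb B C g) (h2 : IsEmb C N g') : IsEmb B N (g' ∘ g) := by
  obtain ⟨hi1, hm1, hr1⟩ := h1
  obtain ⟨hi2, hm2, hr2⟩ := h2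
  refine ⟨?_, ?_, ?_⟩
  · intro x hx y hy hxy
    exact hi1 hx hy (hi2 (hm1 ⟨x, hx, rfl⟩) (hm1 ⟨y, hy, rfl⟩) hxy)
  · rw [Set.image_comp]
    exact (Set.image_mono (f := g') hm1).trans hm2
  · intro r hr
    rw [hr1 r hr, hr2 ⟨r.1, g ∘ r.2⟩ (fun k => hm1 ⟨r.2 k, hr k, rfl⟩)]
    rfl

/-- Pushforward of a structure along a map. -/
def pushf (B : BigFS I ar U) (h : U → U) : BigFS I ar U where
  carrier := h '' B.carrier
  rels := (fun r : (i : I) × (Fin (ar i) → U) => (⟨r.1, h ∘ r.2⟩ : (i : I) × (Fin (ar i) → U))) '' B.rels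
  mem_carrier := by
    rintro r ⟨r', hr', rfl⟩ k
    exact ⟨r'.2 k, B.mem_carrier r' hr' k, rfl⟩

lemma pushf_isEmb {B : BigFS I ar U} {h : U → U} (hinj : Set.InjOn h B.carrier) :
    IsEmb B (pushf B h) h := by
  refine ⟨hinj, subset_refl _, ?_⟩
  intro r hr
  obtain ⟨i, s⟩ := r
  constructor
  · intro hmem; exact ⟨⟨i, s⟩, hmem, rfl⟩
  · rintro ⟨⟨i', s'⟩, hr', heq⟩
    dsimp only at heq
    injection heq with h1 h2
    subst h1
    have hss : s' = s := by
      funext k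
      exact hinj (B.mem_carrier _ hr' k) (hr k) (congrFun (eq_of_heq h2) k)
    rwa [← hss]

lemma exists_preimage_finset {B : BigFS I ar U} (hBfin : B.carrier.Finite) {h : U → U}
    {S : Finset U} (hS : ↑S ⊆ h '' B.carrier) :
    ∃ T : Finset U, ↑T ⊆ B.carrier ∧ S = T.image h := by
  classical
  refine ⟨hBfin.toFinset.filter (fun x => h x ∈ S), ?_, ?_⟩
  · intro x hx
    simp only [Finset.coe_filter, Set.Finite.mem_toFinset, Set.mem_setOf_eq] at hx
    exact hx.1
  · ext y
    simp only [Finset.mem_image, Finset.mem_filter, Set.Finite.mem_toFinset]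
    constructor
    · intro hy
      obtain ⟨x, hx, rfl⟩ := hS hy
      exact ⟨x, ⟨hx, hy⟩, rfl⟩
    · rintro ⟨x, ⟨_, hx2⟩, rfl⟩
      exact hx2

lemma inCbar_pushf {B : BigFS I ar U} (hB : inCbar α B) (hBfin : B.carrier.Finite)
    {h : U → U} (hinj : Set.InjOn h B.carrier) : inCbar α (pushf B h) := by
  intro S hS
  obtain ⟨T, hTc, rfl⟩ := exists_preimage_finset hBfin hS
  have hbij := relsIn_bijOn (pushf_isEmb hinj) hinj (X := ↑T) hTc
  have himg : ((pushf B h).relsIn ↑(T.image h)) = (fun r : (i : I) × (Fin (ar i) → U) =>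
      (⟨r.1, h ∘ r.2⟩ : (i : I) × (Fin (ar i) → U))) '' (B.relsIn ↑T) := by
    rw [Finset.coe_image, ← hbij.image_eq]
  constructor
  · rw [himg]
    exact ((hB T hTc).1).image _
  · rw [bdelta_image (pushf_isEmb hinj) hTc]
    exact (hB T hTc).2

lemma exists_injOn_avoid (D E W : Finset U) (hcard : D.card + E.card ≤ W.card) :
    ∃ ψ : U → U, Set.InjOn ψ ↑D ∧ ∀ x ∈ D, ψ x ∉ E := by
  classical
  obtain ⟨F, hFsub, hFcard⟩ : ∃ F : Finset U, (∀ x ∈ F, x ∉ E) ∧ F.card = D.card := by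
    cases finite_or_infinite U with
    | inr hinf =>
        obtain ⟨F, hF1, hF2⟩ := (E.finite_toSet.infinite_compl).exists_subset_card_eq D.card
        exact ⟨F, fun x hx => hF1 hx, hF2⟩
    | inl hfin =>
        have : Fintype U := Fintype.ofFinite U
        have hle : D.card ≤ Eᶜ.card := by
          have h1 : W.card ≤ Fintype.card U := Finset.card_le_univ W
          have h2 : Eᶜ.card = Fintype.card U - E.card := Finset.card_compl E
          omega
        obtain ⟨F, hF1, hF2⟩ := Finset.exists_subset_card_eq hle
        exact ⟨F, fun x hx => by simpa using hF1 hx, hF2⟩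
  let e := Finset.equivOfCardEq (hFcard.symm : D.card = F.card)
  refine ⟨fun x => if hx : x ∈ D then (e ⟨x, hx⟩ : U) else x, ?_, ?_⟩
  · intro x hx y hy hxy
    simp only [Finset.mem_coe] at hx hy
    dsimp only at hxy
    rw [dif_pos hx, dif_pos hy] at hxy
    have := e.injective (Subtype.ext hxy)
    exact congrArg Subtype.val this
  · intro x hx
    dsimp only
    rw [dif_pos hx]
    exact hFsub _ (e ⟨x, hx⟩).2

lemma relsIn_empty (har : ∀ i, 0 < ar i) : M.relsIn (↑(∅ : Finset U)) = ∅ := by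
  ext r
  simp only [Set.mem_empty_iff_false, iff_false]
  rintro ⟨_, h2⟩
  simpa using h2 ⟨0, har r.1⟩

lemma bdelta_empty (har : ∀ i, 0 < ar i) : bdelta α M (∅ : Finset U) = 0 := by
  rw [bdelta, relsIn_empty har, finsum_mem_empty]
  simp

lemma dim_empty (har : ∀ i, 0 < ar i) (hM : inCbar α M) : dim α M (∅ : Finset U) = 0 := by
  refine le_antisymm ?_ ?_
  · have := dim_le hM (le_refl (∅ : Finset U)) (by simp)
    rwa [bdelta_empty har] at this
  · exact dim_nonneg hM (by simp)

lemma ssSet_empty (har : ∀ i, 0 < ar i) (hM : inCbar α M) : ssSet α M (∅ : Set U) := by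
  refine ⟨Set.empty_subset _, ?_⟩
  intro W hW
  have h0 : bdelta α M (∅ : Finset U) ≤ bdelta α M W := by
    rw [bdelta_empty har]; exact (hM W hW).2
  convert h0 using 2
  ext x; simp

lemma ext' {M N : BigFS I ar U} (h1 : M.carrier = N.carrier) (h2 : M.rels = N.rels) :
    M = N := by
  cases M; cases N
  simp only at h1 h2
  subst h1; subst h2
  rfl

lemma inCbar_induced {Z : Set U} (hM : inCbar α M) (hZ : Z ⊆ M.carrier) :
    inCbar α (inducedBig M Z) := by
  intro S hS
  rw [inducedBig_carrier hZ] at hS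
  rw [relsIn_induced hS, bdelta_induced hS]
  exact ⟨(hM S (hS.trans hZ)).1, (hM S (hS.trans hZ)).2⟩

/-- The key one-point extension step for building an embedding into the generic model. -/
lemma generic_step (har : ∀ i, 0 < ar i) {N Mn : BigFS I ar U}
    (hN : inCbar α N) (hMn : IsGeneric α Mn)
    {A : Finset U} {φ : U → U}
    (hAc : ↑A ⊆ N.carrier) (hAss : ssSet α N ↑A)
    (hemb : IsEmb (inducedBig N ↑A) Mn φ) (himgss : ssSet α Mn (φ '' ↑A))
    (x : U) (hx : x ∈ N.carrier) :
    ∃ (A' : Finset U) (φ' : U → U),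
      (↑A' ⊆ N.carrier ∧ ssSet α N ↑A' ∧ IsEmb (inducedBig N ↑A') Mn φ' ∧
        ssSet α Mn (φ' '' ↑A')) ∧ A ⊆ A' ∧ x ∈ A' ∧ ∀ a ∈ A, φ' a = φ a := by
  classical
  have hxA : ↑(insert x A) ⊆ N.carrier := by
    rw [Finset.coe_insert]; exact Set.insert_subset hx hAc
  obtain ⟨A', hsub0, hA'c, -, hA'ss⟩ := exists_ss_closure hN (insert x A) hxA
  have hAA' : A ⊆ A' := (Finset.subset_insert x A).trans hsub0
  have hAA'c : (↑A : Set U) ⊆ ↑A' := Finset.coe_subset.mpr hAA'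
  have hxA' : x ∈ A' := hsub0 (Finset.mem_insert_self x A)
  have hcarA : (inducedBig N ↑A).carrier = ↑A := inducedBig_carrier hAc
  have hcarA' : (inducedBig N ↑A').carrier = ↑A' := inducedBig_carrier hA'c
  have hφinj : Set.InjOn φ ↑A := by have := hemb.1; rwa [hcarA] at this
  have hφimg : φ '' ↑A ⊆ Mn.carrier := by have := hemb.2.1; rwa [hcarA] at this
  -- fresh names for the new points
  obtain ⟨ψ, hψinj, hψav⟩ := exists_injOn_avoid (A' \ A) (A.image φ) A' (by
    rw [Finset.card_image_of_injOn hφinj, Finset.card_sdiff_add_card_eq_card hAA'])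
  set h : U → U := fun y => if y ∈ A then φ y else ψ y with hh
  have hhA : ∀ a ∈ A, h a = φ a := fun a ha => by simp [hh, ha]
  have hhD : ∀ a ∈ A', a ∉ A → h a = ψ a := fun a _ ha2 => by simp [hh, ha2]
  have hhinj : Set.InjOn h ↑A' := by
    intro u hu v hv huv
    simp only [Finset.mem_coe] at hu hv
    by_cases h1 : u ∈ A <;> by_cases h2 : v ∈ A
    · exact hφinj (Finset.mem_coe.mpr h1) (Finset.mem_coe.mpr h2)
        (by rwa [hhA u h1, hhA v h2] at huv)
    · exfalso
      rw [hhA u h1, hhD v hv h2] at huv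
      exact hψav v (Finset.mem_sdiff.mpr ⟨hv, h2⟩)
        (huv ▸ Finset.mem_image_of_mem φ h1)
    · exfalso
      rw [hhD u hu h1, hhA v h2] at huv
      exact hψav u (Finset.mem_sdiff.mpr ⟨hu, h1⟩)
        (huv.symm ▸ Finset.mem_image_of_mem φ h2)
    · rw [hhD u hu h1, hhD v hv h2] at huv
      exact hψinj (Finset.mem_coe.mpr (Finset.mem_sdiff.mpr ⟨hu, h1⟩))
        (Finset.mem_coe.mpr (Finset.mem_sdiff.mpr ⟨hv, h2⟩)) huv
  have hhinj' : Set.InjOn h (inducedBig N ↑A').carrier := by rwa [hcarA']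
  set Z : Set U := φ '' ↑A with hZ
  have hZh : Z = h '' ↑A := (Set.image_congr hhA).symm
  set B' : BigFS I ar U := pushf (inducedBig N ↑A') h with hB'
  have hembh : IsEmb (inducedBig N ↑A') B' h := pushf_isEmb hhinj'
  have hB'c : B'.carrier = h '' ↑A' := by
    show h '' (inducedBig N ↑A').carrier = h '' ↑A'
    rw [hcarA']
  have hB'fin : B'.carrier.Finite := by
    rw [hB'c]; exact (A'.finite_toSet).image h
  have hNind : inCbar α (inducedBig N ↑A') := inCbar_induced hN hA'c
  have hindfin : (inducedBig N ↑A').carrier.Finite := by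
    rw [hcarA']; exact A'.finite_toSet
  have hB'in : inCbar α B' := inCbar_pushf hNind hindfin hhinj'
  have hZB' : Z ⊆ B'.carrier := by
    rw [hZh, hB'c]; exact Set.image_mono (f := h) hAA'c
  have hZMn : Z ⊆ Mn.carrier := hφimg
  -- bdelta transport along h
  have htrans : ∀ T : Finset U, T ⊆ A' → bdelta α B' (T.image h) = bdelta α N T := by
    intro T hT
    have hTc : ↑T ⊆ (inducedBig N ↑A').carrier := by
      rw [hcarA']; exact Finset.coe_subset.mpr hT
    rw [bdelta_image hembh hTc, bdelta_induced (Finset.coe_subset.mpr hT)]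
  -- Z is self-sufficient in B'
  have hssB'Z : ssSet α B' Z := by
    refine ⟨hZB', ?_⟩
    intro W hW
    obtain ⟨T, hTc, rfl⟩ := exists_preimage_finset hindfin hW
    rw [hcarA'] at hTc
    have hTA' : T ⊆ A' := Finset.coe_subset.mp hTc
    have hssN := hAss.2 T (hTc.trans hA'c)
    have hNN : bdelta α N (T ∩ A) ≤ bdelta α N T := by
      convert hssN using 2
      ext y; simp
    have main : bdelta α B' ((T ∩ A).image h) ≤ bdelta α B' (T.image h) := by
      rw [htrans T hTA', htrans (T ∩ A) ((Finset.inter_subset_left).trans hTA')]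
      exact hNN
    convert main using 2
    ext y
    simp only [Finset.mem_filter, Finset.mem_image, Finset.mem_inter]
    constructor
    · rintro ⟨⟨t, ht, rfl⟩, hyZ⟩
      rw [hZh] at hyZ
      obtain ⟨a, ha, hha⟩ := hyZ
      have : t = a := hhinj (Finset.mem_coe.mpr (hTA' ht)) (hAA'c ha) hha.symm
      subst this
      exact ⟨t, ⟨ht, ha⟩, rfl⟩
    · rintro ⟨t, ⟨ht1, ht2⟩, rfl⟩
      refine ⟨⟨t, ht1, rfl⟩, ?_⟩
      rw [hZh]
      exact ⟨t, ht2, rfl⟩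
  -- the induced structures on Z agree
  have hind : inducedBig B' Z = inducedBig Mn Z := by
    apply ext'
    · rw [inducedBig_carrier hZB', inducedBig_carrier hZMn]
    · show B'.relsIn Z = Mn.relsIn Z
      have hbij1 := relsIn_bijOn hembh hhinj' (X := ↑A) (by rw [hcarA']; exact hAA'c)
      have hbij2 := relsIn_bijOn hemb hemb.1 (X := ↑A) (by rw [hcarA])
      have hrw1 : (inducedBig N ↑A').relsIn ↑A = N.relsIn ↑A := relsIn_induced hAA'c
      have hrw2 : (inducedBig N ↑A).relsIn ↑A = N.relsIn ↑A := relsIn_induced subset_rfl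
      rw [hrw1] at hbij1
      rw [hrw2] at hbij2
      have e1 : B'.relsIn (h '' ↑A) = (fun r : (i : I) × (Fin (ar i) → U) =>
          (⟨r.1, h ∘ r.2⟩ : (i : I) × (Fin (ar i) → U))) '' (N.relsIn ↑A) :=
        hbij1.image_eq.symm
      have e2 : Mn.relsIn (φ '' ↑A) = (fun r : (i : I) × (Fin (ar i) → U) =>
          (⟨r.1, φ ∘ r.2⟩ : (i : I) × (Fin (ar i) → U))) '' (N.relsIn ↑A) :=
        hbij2.image_eq.symm
      have f1 : B'.relsIn Z = (fun r : (i : I) × (Fin (ar i) → U) =>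
          (⟨r.1, h ∘ r.2⟩ : (i : I) × (Fin (ar i) → U))) '' (N.relsIn ↑A) := by
        rw [hZh]; exact e1
      have f2 : Mn.relsIn Z = (fun r : (i : I) × (Fin (ar i) → U) =>
          (⟨r.1, φ ∘ r.2⟩ : (i : I) × (Fin (ar i) → U))) '' (N.relsIn ↑A) := by
        rw [hZ]; exact e2
      rw [f1, f2]
      apply Set.image_congr
      intro r hr
      have : h ∘ r.2 = φ ∘ r.2 := by
        funext k
        exact hhA (r.2 k) (Finset.mem_coe.mp (hr.2 k))
      rw [this]
  obtain ⟨g', hg'emb, hg'fix, hg'ss⟩ :=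
    hMn.2.2 B' hB'fin hB'in Z hZB' hssB'Z himgss hind
  refine ⟨A', g' ∘ h, ⟨hA'c, hA'ss, hembh.comp hg'emb, ?_⟩, hAA', hxA', ?_⟩
  · have : (g' ∘ h) '' ↑A' = g' '' B'.carrier := by
      rw [Set.image_comp, hB'c]
    rw [this]
    exact hg'ss
  · intro a ha
    have h1 : h a = φ a := hhA a ha
    have h2 : φ a ∈ Z := Set.mem_image_of_mem φ (Finset.mem_coe.mpr ha)
    simp only [Function.comp_apply, h1]
    exact hg'fix _ h2

/-- Any countable structure in `𝒞̄` embeds into the generic model preserving dimension. -/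
lemma generic_embed (har : ∀ i, 0 < ar i) {N Mn : BigFS I ar U}
    (hN : inCbar α N) (hNc : N.carrier.Countable) (hMn : IsGeneric α Mn) :
    ∃ g : U → U, Set.InjOn g N.carrier ∧ g '' N.carrier ⊆ Mn.carrier ∧
      ∀ S : Finset U, ↑S ⊆ N.carrier → dim α Mn (S.image g) = dim α N S := by
  classical
  have hMnin : inCbar α Mn := hMn.2.1
  rcases Set.eq_empty_or_nonempty N.carrier with hemp | hne
  · refine ⟨id, ?_, ?_, ?_⟩
    · rw [hemp]; exact Set.injOn_empty id
    · rw [hemp]; simp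
    · intro S hS
      rw [hemp, Set.subset_empty_iff] at hS
      have hS0 : S = ∅ := by ext y; simpa using congrArg (y ∈ ·) hS
      subst hS0
      rw [Finset.image_empty, dim_empty har hMnin, dim_empty har hN]
  obtain ⟨e, he⟩ := hNc.exists_eq_range hne
  let Good : Finset U → (U → U) → Prop := fun A φ =>
    ↑A ⊆ N.carrier ∧ ssSet α N ↑A ∧ IsEmb (inducedBig N ↑A) Mn φ ∧ ssSet α Mn (φ '' ↑A)
  have hgood0 : Good ∅ id := by
    refine ⟨by simp, by simpa using ssSet_empty har hN, ⟨?_, ?_, ?_⟩,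
      by simpa using ssSet_empty har hMnin⟩
    · intro u hu
      exfalso; exact absurd hu.2 (by simp)
    · rintro y ⟨u, hu, rfl⟩
      exfalso; exact absurd hu.2 (by simp)
    · intro r hrc
      exfalso; exact absurd (hrc ⟨0, har r.1⟩).2 (by simp)
  have hstep : ∀ (p : {p : Finset U × (U → U) // Good p.1 p.2}) (j : ℕ),
      ∃ q : {q : Finset U × (U → U) // Good q.1 q.2},
        p.1.1 ⊆ q.1.1 ∧ e j ∈ q.1.1 ∧ ∀ a ∈ p.1.1, q.1.2 a = p.1.2 a := by
    rintro ⟨⟨A, φ⟩, hA1, hA2, hA3, hA4⟩ j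
    have hej : e j ∈ N.carrier := by rw [he]; exact ⟨j, rfl⟩
    obtain ⟨A', φ', hg, h1, h2, h3⟩ := generic_step har hN hMn hA1 hA2 hA3 hA4 (e j) hej
    exact ⟨⟨(A', φ'), hg⟩, h1, h2, h3⟩
  let F : ℕ → {p : Finset U × (U → U) // Good p.1 p.2} :=
    fun j => Nat.rec ⟨(∅, id), hgood0⟩ (fun j p => (hstep p j).choose) j
  let A : ℕ → Finset U := fun j => (F j).1.1
  let φ : ℕ → U → U := fun j => (F j).1.2
  have hgood : ∀ j, Good (A j) (φ j) := fun j => (F j).2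
  have hFsucc : ∀ j, A j ⊆ A (j+1) ∧ e j ∈ A (j+1) ∧ ∀ a ∈ A j, φ (j+1) a = φ j a :=
    fun j => (hstep (F j) j).choose_spec
  have hmono : ∀ j k, j ≤ k → A j ⊆ A k := by
    intro j k hjk
    induction k, hjk using Nat.le_induction with
    | base => exact subset_rfl
    | succ k hjk ih => exact ih.trans (hFsucc k).1
  have hagree : ∀ j k, j ≤ k → ∀ a ∈ A j, φ k a = φ j a := by
    intro j k hjk
    induction k, hjk using Nat.le_induction with
    | base => intro a _; rfl
    | succ k hjk ih =>
        intro a ha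
        rw [(hFsucc k).2.2 a (hmono j k hjk ha), ih a ha]
  set g : U → U := fun u => if hu : ∃ j, u ∈ A j then φ (Nat.find hu) u else u with hg
  have hgA : ∀ k, ∀ u ∈ A k, g u = φ k u := by
    intro k u hu
    have hex : ∃ j, u ∈ A j := ⟨k, hu⟩
    have h1 : g u = φ (Nat.find hex) u := by
      show (if hu : ∃ j, u ∈ A j then φ (Nat.find hu) u else u) = _
      rw [dif_pos hex]
    rw [h1]
    exact (hagree (Nat.find hex) k (Nat.find_min' hex hu) u (Nat.find_spec hex)).symm
  have hcover : ∀ S : Finset U, ↑S ⊆ N.carrier → ∃ k, S ⊆ A k := by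
    intro S
    induction S using Finset.induction with
    | empty => exact fun _ => ⟨0, by simp⟩
    | @insert a S ha ih =>
        intro hins
        rw [Finset.coe_insert, Set.insert_subset_iff] at hins
        obtain ⟨k1, hk1⟩ := ih hins.2
        obtain ⟨i, rfl⟩ : ∃ i, e i = a := by
          have := hins.1; rw [he] at this; exact this
        refine ⟨max k1 (i+1), ?_⟩
        rw [Finset.insert_subset_iff]
        exact ⟨hmono (i+1) _ (le_max_right _ _) (hFsucc i).2.1,
          hk1.trans (hmono k1 _ (le_max_left _ _))⟩
  have hsingle : ∀ u ∈ N.carrier, ∃ k, u ∈ A k := by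
    intro u hu
    rw [he] at hu
    obtain ⟨i, rfl⟩ := hu
    exact ⟨i + 1, (hFsucc i).2.1⟩
  have hcark : ∀ k, (inducedBig N ↑(A k)).carrier = ↑(A k) :=
    fun k => inducedBig_carrier (hgood k).1
  have hφinj : ∀ k, Set.InjOn (φ k) ↑(A k) := by
    intro k; have := (hgood k).2.2.1.1; rwa [hcark k] at this
  have hφimg : ∀ k, (φ k) '' ↑(A k) ⊆ Mn.carrier := by
    intro k; have := (hgood k).2.2.1.2.1; rwa [hcark k] at this
  refine ⟨g, ?_, ?_, ?_⟩
  · intro u hu v hv huv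
    obtain ⟨ku, hku⟩ := hsingle u hu
    obtain ⟨kv, hkv⟩ := hsingle v hv
    have hu' : u ∈ A (max ku kv) := hmono ku _ (le_max_left _ _) hku
    have hv' : v ∈ A (max ku kv) := hmono kv _ (le_max_right _ _) hkv
    rw [hgA _ u hu', hgA _ v hv'] at huv
    exact hφinj (max ku kv) (Finset.mem_coe.mpr hu') (Finset.mem_coe.mpr hv') huv
  · rintro y ⟨u, hu, rfl⟩
    obtain ⟨k, hk⟩ := hsingle u hu
    rw [hgA k u hk]
    exact hφimg k ⟨u, Finset.mem_coe.mpr hk, rfl⟩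
  · intro S hS
    obtain ⟨T₀, hST₀, hT₀c, hT₀d, -⟩ := exists_ss_closure hN S hS
    obtain ⟨k, hTk⟩ := hcover T₀ hT₀c
    have hSk : S ⊆ A k := hST₀.trans hTk
    have himS : S.image g = S.image (φ k) :=
      Finset.image_congr (fun u hu => hgA k u (hSk hu))
    have htrans : ∀ T : Finset U, T ⊆ A k →
        bdelta α Mn (T.image (φ k)) = bdelta α N T := by
      intro T hT
      rw [bdelta_image (hgood k).2.2.1 (by rw [hcark k]; exact Finset.coe_subset.mpr hT),
        bdelta_induced (Finset.coe_subset.mpr hT)]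
    apply le_antisymm
    · rw [himS]
      have h1 : dim α Mn (T₀.image (φ k)) ≤ bdelta α Mn (T₀.image (φ k)) → True := fun _ => trivial
      have h2 : dim α Mn (S.image (φ k)) ≤ bdelta α Mn (T₀.image (φ k)) :=
        dim_le hMnin (Finset.image_subset_image hST₀) (by
          rw [Finset.coe_image]
          exact (Set.image_mono (Finset.coe_subset.mpr hTk)).trans (hφimg k))
      rw [htrans T₀ hTk, hT₀d] at h2
      exact h2
    · rw [himS]
      have hSimg : ↑(S.image (φ k)) ⊆ Mn.carrier := by
        rw [Finset.coe_image]
        exact (Set.image_mono (Finset.coe_subset.mpr hSk)).trans (hφimg k)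
      apply le_dim hSimg
      intro W hSW hWc
      have hss := (hgood k).2.2.2.2 W hWc
      set T : Finset U := (A k).filter (fun a => φ k a ∈ W) with hT
      have hTsub : T ⊆ A k := Finset.filter_subset _ _
      have hWT : bdelta α Mn (T.image (φ k)) ≤ bdelta α Mn W := by
        have key : bdelta α Mn (W.filter (fun y => y ∈ (φ k) '' ↑(A k)))
            ≤ bdelta α Mn W := hss
        convert key using 2
        ext y
        simp only [Finset.mem_image, Finset.mem_filter, hT]
        constructor
        · rintro ⟨a, ⟨ha1, ha2⟩, rfl⟩
          exact ⟨ha2, ⟨a, Finset.mem_coe.mpr ha1, rfl⟩⟩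
        · rintro ⟨hyW, ⟨a, ha, rfl⟩⟩
          exact ⟨a, ⟨Finset.mem_coe.mp ha, hyW⟩, rfl⟩
      have hST : S ⊆ T := by
        intro s hs
        rw [hT, Finset.mem_filter]
        exact ⟨hSk hs, hSW (Finset.mem_image_of_mem _ hs)⟩
      have h3 : dim α N S ≤ bdelta α N T :=
        dim_le hN hST ((Finset.coe_subset.mpr hTsub).trans (hgood k).1)
      rw [← htrans T hTsub] at h3
      exact h3.trans hWT

-- MORE LEMMAS HERE

end BigFS

/-- Extend a triple to an `n`-tuple by repeating the last coordinate. -/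
def ext3 {U : Type} (n : ℕ) (hn : 3 ≤ n) (s : Fin 3 → U) : Fin n → U :=
  fun k => if h : (k : ℕ) < 3 then s ⟨k, h⟩ else s ⟨2, by norm_num⟩

lemma ext3_apply_lt {U : Type} (n : ℕ) (hn : 3 ≤ n) (s : Fin 3 → U) (j : Fin 3) :
    ext3 n hn s ⟨j.val, lt_of_lt_of_le j.2 hn⟩ = s j := by
  unfold ext3
  rw [dif_pos (show ((⟨j.val, lt_of_lt_of_le j.2 hn⟩ : Fin n) : ℕ) < 3 from j.2)]

/-- arity reduction: replacing each triple of `M₃` by the `n`-tuple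
`(a₁,a₂,a₃,a₃,…,a₃)` yields an `L_n`-structure `M₃ʰ ∈ 𝒞̄_n` with the same
predimension (hence the same pregeometry) as `M₃`; consequently `PG(M₃)` embeds
into `PG(M_n)`. -/
theorem arity_reduction_embedding {U : Type} (n : ℕ) (hn : 3 ≤ n)
    (M₃ : BigFS PUnit (fun _ => 3) U) (hM₃ : IsGeneric (fun _ => 1) M₃)
    (Mn : BigFS PUnit (fun _ => n) U) (hMn : IsGeneric (fun _ => 1) Mn)
    (M₃h : BigFS PUnit (fun _ => n) U) (hc : M₃h.carrier = M₃.carrier)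
    (hr : M₃h.rels = {r | ∃ s : Fin 3 → U,
      (⟨PUnit.unit, s⟩ : (i : PUnit) × (Fin 3 → U)) ∈ M₃.rels ∧
      r = ⟨PUnit.unit, ext3 n hn s⟩}) :
    inCbar (fun _ => 1) M₃h ∧
    (∀ S : Finset U, bdelta (fun _ => 1) M₃h S = bdelta (fun _ => 1) M₃ S) ∧
    (∀ S : Finset U, dim (fun _ => 1) M₃h S = dim (fun _ => 1) M₃ S) ∧
    ∃ g : U → U, Set.InjOn g M₃.carrier ∧ g '' M₃.carrier ⊆ Mn.carrier ∧
      ∀ S : Finset U, ↑S ⊆ M₃.carrier →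
        dim (fun _ => 1) Mn (S.image g) = dim (fun _ => 1) M₃ S := by
  classical
  -- The bijection between relation sets
  have hbij : ∀ S : Finset U,
      Set.BijOn (fun r : (i : PUnit) × (Fin 3 → U) =>
          (⟨PUnit.unit, ext3 n hn r.2⟩ : (i : PUnit) × (Fin n → U)))
        (M₃.relsIn ↑S) (M₃h.relsIn ↑S) := by
    intro S
    refine ⟨?_, ?_, ?_⟩
    · rintro ⟨u, s⟩ ⟨h1, h2⟩
      cases u
      refine ⟨?_, ?_⟩
      · rw [hr]; exact ⟨s, h1, rfl⟩
      · intro k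
        show ext3 n hn s k ∈ (↑S : Set U)
        unfold ext3
        split
        · exact h2 _
        · exact h2 _
    · rintro ⟨u, s⟩ ⟨h1, h2⟩ ⟨u', s'⟩ ⟨h1', h2'⟩ heq
      cases u; cases u'
      dsimp only at heq
      injection heq with hi hs
      have hss : s = s' := by
        funext j
        have h5 := congrFun hs (⟨j.val, lt_of_lt_of_le j.2 hn⟩ : Fin n)
        rwa [ext3_apply_lt, ext3_apply_lt] at h5
      rw [hss]
    · rintro ⟨u, t⟩ ⟨h1, h2⟩
      cases u
      rw [hr] at h1
      obtain ⟨s, hs1, hs2⟩ := h1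
      injection hs2 with hi ht
      have hsS : ∀ j : Fin 3, s j ∈ (↑S : Set U) := by
        intro j
        have h6 := h2 (⟨j.val, lt_of_lt_of_le j.2 hn⟩ : Fin n)
        dsimp only at h6
        rw [ht] at h6
        rwa [ext3_apply_lt] at h6
      refine ⟨⟨PUnit.unit, s⟩, ⟨hs1, hsS⟩, ?_⟩
      dsimp only
      exact congrArg (fun u => (⟨PUnit.unit, u⟩ : (i : PUnit) × (Fin n → U))) ht.symm
  -- predimension equality
  have hbd : ∀ S : Finset U, bdelta (fun _ => 1) M₃h S = bdelta (fun _ => 1) M₃ S := by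
    intro S
    rw [bdelta, bdelta]
    congr 1
    exact (finsum_mem_eq_of_bijOn _ (hbij S) (fun x _ => rfl)).symm
  -- membership in 𝒞̄
  have hin : inCbar (fun _ => 1) M₃h := by
    intro S hS
    rw [hc] at hS
    obtain ⟨hfin, hnn⟩ := hM₃.2.1 S hS
    constructor
    · rw [← (hbij S).image_eq]
      exact hfin.image _
    · rw [hbd S]; exact hnn
  -- dimension equality
  have hdim : ∀ S : Finset U, dim (fun _ => 1) M₃h S = dim (fun _ => 1) M₃ S := by
    intro S
    rw [dim, dim]
    congr 1
    ext z
    constructor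
    · rintro ⟨T, h1, h2, h3⟩
      exact ⟨T, h1, by rwa [hc] at h2, by rw [← hbd T]; exact h3⟩
    · rintro ⟨T, h1, h2, h3⟩
      exact ⟨T, h1, by rwa [hc], by rw [hbd T]; exact h3⟩
  refine ⟨hin, hbd, hdim, ?_⟩
  have har : ∀ _ : PUnit, 0 < n := fun _ => by omega
  have hNc : M₃h.carrier.Countable := by rw [hc]; exact hM₃.1
  obtain ⟨g, hg1, hg2, hg3⟩ := generic_embed har hin hNc hMn
  refine ⟨g, ?_, ?_, ?_⟩
  · rwa [← hc]
  · rwa [← hc]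
  · intro S hS
    rw [hg3 S (by rwa [hc]), hdim S]
end

section
/- Derivative replacement preserves the class: let M be an L_{ω(3)}-structure (relations R_n for n ≥ 3, predimension δ(A) = |A| − Σ_{n≥3}|R_n^A|), and let b̄ = (b₁,…,b_n) ∈ R_n^M with n ≥ 4. Form M^{b̄} by deleting the tuple b̄, adding new distinct points x₁,…,x_{n−1}, and adding the relations (b₁,x₁,b₂), (b₂,x₂,b₃), …, (b_{n−1},x_{n−1},b_n) and (x₁,…,x_{n−1}). Then for every finite A' ⊆ M^{b̄}, writing A = A' ∩ M, one has δ(A') ≥ δ(A[M]); in particular if all finite substructures of M have nonnegative δ then the same holds for M^{b̄}. -/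
open Classical

open BigFS

/-- Auxiliary: `bdelta` with unit weights counts relation instances. -/
lemma bdelta_eq_card {I U : Type} {ar : I → ℕ} (M : BigFS I ar U) (S : Finset U)
    (h : (M.relsIn ↑S).Finite) :
    bdelta (fun _ => 1) M S = (S.card : ℤ) - (h.toFinset.card : ℤ) := by
  unfold bdelta
  rw [finsum_mem_eq_finite_toFinset_sum _ h]
  simp

/-- The language `L_{ω(3)}`: one `k`-ary relation for each `k ≥ 3`. -/
abbrev Iw : Type := {k : ℕ // 3 ≤ k}
abbrev arw : Iw → ℕ := fun i => i.1

/-- derivative replacement preserves the class: replacing an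
`(m+1)`-ary tuple `b` (`m + 1 ≥ 4`) by the chain of ternary relations through new
points `x₁,…,x_m` together with the `m`-ary relation `(x₁,…,x_m)` does not decrease
predimension: for every finite `A' ⊆ M^{b̄}`, `δ(A') ≥ δ(A' ∩ M)`; in particular
`M ∈ 𝒞̄` implies `M^{b̄} ∈ 𝒞̄`. -/
theorem derivative_preserves_class {U : Type} (M : BigFS Iw arw U)
    (hfin : ∀ S : Finset U, ↑S ⊆ M.carrier → (M.relsIn ↑S).Finite)
    (m : ℕ) (hm : 3 ≤ m) (b : Fin (m + 1) → U)
    (hb : (⟨⟨m + 1, by omega⟩, b⟩ : (i : Iw) × (Fin i.1 → U)) ∈ M.rels)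
    (x : Fin m → U) (hxinj : Function.Injective x)
    (hxnew : ∀ k, x k ∉ M.carrier)
    (M' : BigFS Iw arw U)
    (hc : M'.carrier = M.carrier ∪ Set.range x)
    (hr : M'.rels =
      (M.rels \ {(⟨⟨m + 1, by omega⟩, b⟩ : (i : Iw) × (Fin i.1 → U))}) ∪
      {r | ∃ k : Fin m, r = (⟨⟨3, le_refl 3⟩,
          ![b k.castSucc, x k, b k.succ]⟩ : (i : Iw) × (Fin i.1 → U))} ∪
      {(⟨⟨m, hm⟩, x⟩ : (i : Iw) × (Fin i.1 → U))}) :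
    (∀ A' : Finset U, ↑A' ⊆ M'.carrier →
      bdelta (fun _ => 1) M (A'.filter (fun a => a ∈ M.carrier)) ≤
        bdelta (fun _ => 1) M' A') ∧
    (inCbar (fun _ => 1) M → inCbar (fun _ => 1) M') := by
    classical
  have key : ∀ A' : Finset U, ↑A' ⊆ M'.carrier →
      (M'.relsIn ↑A').Finite ∧
      bdelta (fun _ => 1) M (A'.filter (fun a => a ∈ M.carrier)) ≤
        bdelta (fun _ => 1) M' A' := by
    intro A' hA'
    set bigrel : (i : Iw) × (Fin i.1 → U) := ⟨⟨m + 1, by omega⟩, b⟩ with hbig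
    set xrel : (i : Iw) × (Fin i.1 → U) := ⟨⟨m, hm⟩, x⟩ with hxrel
    set chain : Fin m → ((i : Iw) × (Fin i.1 → U)) :=
      fun k => ⟨⟨3, le_refl 3⟩, ![b k.castSucc, x k, b k.succ]⟩ with hchain
    set A : Finset U := A'.filter (fun a => a ∈ M.carrier) with hAdef
    have hA : ↑A ⊆ M.carrier := by
      intro a ha
      simp only [hAdef, Finset.coe_filter, Set.mem_setOf_eq] at ha
      exact ha.2
    set Xs : Finset U := A'.filter (fun a => a ∉ M.carrier) with hXsdef
    have hcardA : A.card + Xs.card = A'.card :=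
      Finset.card_filter_add_card_filter_not (fun a => a ∈ M.carrier)
    set Rold : Finset ((i : Iw) × (Fin i.1 → U)) := (hfin A hA).toFinset with hRold
    have hbmem : ∀ j, b j ∈ M.carrier := fun j => M.mem_carrier _ hb j
    have chaininj : Function.Injective chain := by
      intro k k' hkk
      simp only [hchain] at hkk
      have h2 := (Sigma.mk.inj_iff.mp hkk).2
      have h3 : (![b k.castSucc, x k, b k.succ] : Fin 3 → U)
          = ![b k'.castSucc, x k', b k'.succ] := eq_of_heq h2
      have h4 := congrFun h3 1
      simp only [Matrix.cons_val_one, Matrix.head_cons] at h4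
      exact hxinj h4
    set K : Finset (Fin m) := Finset.univ.filter
      (fun k : Fin m => x k ∈ A' ∧ b k.castSucc ∈ A' ∧ b k.succ ∈ A') with hKdef
    set E : Finset ((i : Iw) × (Fin i.1 → U)) :=
      if (∀ k, x k ∈ A') then {xrel} else ∅ with hEdef
    have hsub : M'.relsIn ↑A' ⊆ ↑(Rold.erase bigrel ∪ K.image chain ∪ E) := by
      rintro r ⟨hrel, hent⟩
      rw [hr] at hrel
      simp only [Set.mem_union, Set.mem_diff, Set.mem_singleton_iff,
        Set.mem_setOf_eq] at hrel
      simp only [Finset.coe_union, Set.mem_union, Finset.mem_coe,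
        Finset.mem_erase, Finset.mem_image]
      rcases hrel with ((⟨hrM, hrne⟩ | ⟨k, rfl⟩) | hrx)
      · left; left
        refine ⟨hrne, ?_⟩
        rw [hRold, Set.Finite.mem_toFinset]
        refine ⟨hrM, fun j => ?_⟩
        simp only [hAdef, Finset.coe_filter, Set.mem_setOf_eq]
        exact ⟨hent j, M.mem_carrier r hrM j⟩
      · left; right
        refine ⟨k, ?_, rfl⟩
        have h0 := hent 0
        have h1 := hent 1
        have h2 := hent 2
        simp only [Matrix.cons_val_zero, Matrix.cons_val_one, Matrix.head_cons,
          Matrix.cons_val_two, Matrix.tail_cons, Finset.mem_coe] at h0 h1 h2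
        simp only [hKdef, Finset.mem_filter, Finset.mem_univ, true_and]
        exact ⟨h1, h0, h2⟩
      · right
        have hrx' : r = xrel := hrx
        subst hrx'
        have hall : ∀ k, x k ∈ A' := fun k => hent k
        rw [hEdef, if_pos hall]
        exact Finset.mem_singleton_self _
    have R'fin : (M'.relsIn ↑A').Finite :=
      Set.Finite.subset (Finset.finite_toSet _) hsub
    refine ⟨R'fin, ?_⟩
    have hsubF : R'fin.toFinset ⊆ Rold.erase bigrel ∪ K.image chain ∪ E :=
      Set.Finite.toFinset_subset.mpr hsub
    have hcard1 : R'fin.toFinset.card ≤ (Rold.erase bigrel).card + K.card + E.card := by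
      calc R'fin.toFinset.card ≤ (Rold.erase bigrel ∪ K.image chain ∪ E).card :=
            Finset.card_le_card hsubF
        _ ≤ (Rold.erase bigrel ∪ K.image chain).card + E.card := Finset.card_union_le _ _
        _ ≤ (Rold.erase bigrel).card + (K.image chain).card + E.card := by
            have := Finset.card_union_le (Rold.erase bigrel) (K.image chain)
            omega
        _ = (Rold.erase bigrel).card + K.card + E.card := by
            rw [Finset.card_image_of_injective _ chaininj]
    have hKX : K.card ≤ Xs.card := by
      apply Finset.card_le_card_of_injOn x
      · intro k hk
        simp only [hKdef, Finset.mem_coe, Finset.mem_filter, Finset.mem_univ, true_and] at hk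
        simp only [hXsdef, Finset.mem_coe, Finset.mem_filter]
        exact ⟨hk.1, hxnew k⟩
      · exact Function.Injective.injOn hxinj
    have herase_le : (Rold.erase bigrel).card ≤ Rold.card := Finset.card_erase_le
    rw [bdelta_eq_card M A (hfin A hA), bdelta_eq_card M' A' R'fin]
    rw [← hRold]
    by_cases h1 : ∀ k, x k ∈ A'
    · have hE1 : E.card = 1 := by rw [hEdef, if_pos h1]; rfl
      have hXm : m ≤ Xs.card := by
        have hss : Finset.univ.image x ⊆ Xs := by
          intro a ha
          simp only [Finset.mem_image, Finset.mem_univ, true_and] at ha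
          obtain ⟨k, rfl⟩ := ha
          simp only [hXsdef, Finset.mem_filter]
          exact ⟨h1 k, hxnew k⟩
        have := Finset.card_le_card hss
        rwa [Finset.card_image_of_injective _ hxinj, Finset.card_univ,
          Fintype.card_fin] at this
      by_cases h2 : ∀ k : Fin m, k ∈ K
      · have hbigR : bigrel ∈ Rold := by
          rw [hRold, Set.Finite.mem_toFinset]
          refine ⟨hb, fun j => ?_⟩
          simp only [hAdef, Finset.coe_filter, Set.mem_setOf_eq]
          refine ⟨?_, hbmem j⟩
          have hjlt : (j : ℕ) < m + 1 := j.2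
          by_cases hj : (j : ℕ) < m
          · have hk := Finset.mem_filter.mp (h2 ⟨j, hj⟩) |>.2.2.1
            have : Fin.castSucc (⟨(j : ℕ), hj⟩ : Fin m) = j := by
              apply Fin.ext; simp
            rwa [this] at hk
          · have hjm : (j : ℕ) = m := by omega
            have hk := Finset.mem_filter.mp (h2 ⟨m - 1, by omega⟩) |>.2.2.2
            have : Fin.succ (⟨m - 1, by omega⟩ : Fin m) = j := by
              apply Fin.ext; simp [hjm]; omega
            rwa [this] at hk
        have herase : (Rold.erase bigrel).card = Rold.card - 1 :=
          Finset.card_erase_of_mem hbigR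
        have hpos : 1 ≤ Rold.card := Finset.card_pos.mpr ⟨bigrel, hbigR⟩
        have hKm : K.card ≤ m := by
          have := Finset.card_filter_le Finset.univ
            (fun k : Fin m => x k ∈ A' ∧ b k.castSucc ∈ A' ∧ b k.succ ∈ A')
          simpa [hKdef] using this
        omega
      · push_neg at h2
        obtain ⟨k0, hk0⟩ := h2
        have hKlt : K.card < m := by
          have hne : K ≠ Finset.univ := fun h => hk0 (h ▸ Finset.mem_univ k0)
          have := Finset.card_lt_card (Finset.ssubset_univ_iff.mpr hne)
          simpa using this
        omega
    · have hE0 : E.card = 0 := by rw [hEdef, if_neg h1]; rfl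
      omega
  constructor
  · intro A' hA'
    exact (key A' hA').2
  · intro hM S hS
    have hA : ↑(S.filter (fun a => a ∈ M.carrier)) ⊆ M.carrier := by
      intro a ha
      simp only [Finset.coe_filter, Set.mem_setOf_eq] at ha
      exact ha.2
    exact ⟨(key S hS).1, le_trans (hM _ hA).2 (key S hS).2⟩
end

section
/- Fourth Changing Lemma (finite case): let M ∈ 𝒞̄_f, Z ≤ M with Z finite, and Z' ∈ 𝒞_f a structure on the same underlying set as Z; let M' be obtained from M by replacing Z by Z'. Then for every finite A ⊆ M, d_M(A ∪ Z) − d_M(Z) = d_{M'}(A ∪ Z) − d_{M'}(Z); i.e., the localizations PG_Z(M) and PG_{Z'}(M') coincide. -/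
open Classical

open BigFS
/-- Fourth Changing Lemma, finite case: if `M ∈ 𝒞̄_f`, `Z ≤ M` is
finite, `Z' ∈ 𝒞_f` has the same underlying set, and `M'` is obtained from `M` by
replacing `Z` by `Z'`, then the localized dimensions coincide:
`d_M(A ∪ Z) − d_M(Z) = d_{M'}(A ∪ Z) − d_{M'}(Z)` for all finite `A ⊆ M`. -/
theorem fourth_changing_lemma_finite {I U : Type} {ar : I → ℕ} (α : I → ℕ)
    (hα : ∀ i, 0 < α i) (M : BigFS I ar U) (hM : inCbar α M)
    (Z : Finset U) (hZ : ssIn α M Z)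
    (Z' : BigFS I ar U) (hZ'c : Z'.carrier = ↑Z) (hZ' : inCbar α Z')
    (M' : BigFS I ar U) (hc : M'.carrier = M.carrier)
    (hr : M'.rels = (M.rels \ M.relsIn ↑Z) ∪ Z'.rels) :
    ∀ A : Finset U, ↑A ⊆ M.carrier →
      dim α M (A ∪ Z) - dim α M Z = dim α M' (A ∪ Z) - dim α M' Z := by
  have hZc : (↑Z : Set U) ⊆ M.carrier := hZ.1
  have hZ'rels : Z'.rels = Z'.relsIn ↑Z := by
    ext r
    exact ⟨fun h => ⟨h, fun k => hZ'c ▸ Z'.mem_carrier r h k⟩, fun h => h.1⟩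
  have hfinZ' : Z'.rels.Finite := by
    rw [hZ'rels]; exact (hZ' Z (by rw [hZ'c])).1
  have hfinZ : (M.relsIn ↑Z).Finite := (hM Z hZc).1
  set c : ℤ := (∑ᶠ r ∈ M.relsIn ↑Z, (α r.1 : ℤ)) - ∑ᶠ r ∈ Z'.rels, (α r.1 : ℤ) with hcdef
  have key : ∀ T : Finset U, Z ⊆ T → ↑T ⊆ M.carrier →
      bdelta α M' T = bdelta α M T + c := by
    intro T hZT hT
    have hZT' : (↑Z : Set U) ⊆ ↑T := Finset.coe_subset.mpr hZT
    have hsub : M.relsIn ↑Z ⊆ M.relsIn ↑T := fun r hr' => ⟨hr'.1, fun k => hZT' (hr'.2 k)⟩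
    have hfinT : (M.relsIn ↑T).Finite := (hM T hT).1
    have hset : M'.relsIn ↑T = (M.relsIn ↑T \ M.relsIn ↑Z) ∪ Z'.rels := by
      ext r
      constructor
      · rintro ⟨hrm, hent⟩
        rw [hr] at hrm
        rcases hrm with ⟨hrM, hrnZ⟩ | hrZ'
        · exact Or.inl ⟨⟨hrM, hent⟩, hrnZ⟩
        · exact Or.inr hrZ'
      · rintro (⟨⟨hrM, hent⟩, hrnZ⟩ | hrZ')
        · exact ⟨by rw [hr]; exact Or.inl ⟨hrM, hrnZ⟩, hent⟩
        · refine ⟨by rw [hr]; exact Or.inr hrZ', fun k => hZT' ?_⟩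
          rw [← hZ'c]; exact Z'.mem_carrier r hrZ' k
    have hdisj : Disjoint (M.relsIn ↑T \ M.relsIn ↑Z) Z'.rels := by
      rw [Set.disjoint_left]
      rintro r ⟨⟨hrM, _⟩, hrnZ⟩ hrZ'
      exact hrnZ ⟨hrM, fun k => by rw [← hZ'c]; exact Z'.mem_carrier r hrZ' k⟩
    have h1 : (∑ᶠ r ∈ M'.relsIn ↑T, (α r.1 : ℤ)) =
        (∑ᶠ r ∈ M.relsIn ↑T \ M.relsIn ↑Z, (α r.1 : ℤ)) + ∑ᶠ r ∈ Z'.rels, (α r.1 : ℤ) := by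
      rw [hset]
      exact finsum_mem_union hdisj hfinT.diff hfinZ'
    have h2 : (∑ᶠ r ∈ M.relsIn ↑T, (α r.1 : ℤ)) =
        (∑ᶠ r ∈ M.relsIn ↑T \ M.relsIn ↑Z, (α r.1 : ℤ)) + ∑ᶠ r ∈ M.relsIn ↑Z, (α r.1 : ℤ) := by
      conv_lhs => rw [← Set.diff_union_of_subset hsub]
      exact finsum_mem_union Set.disjoint_sdiff_left hfinT.diff hfinZ
    simp only [bdelta, h1, h2, hcdef]
    ring
  have hdim : ∀ S : Finset U, Z ⊆ S → ↑S ⊆ M.carrier →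
      dim α M' S = dim α M S + c := by
    intro S hZS hS
    have hne : {z : ℤ | ∃ T : Finset U, S ⊆ T ∧ ↑T ⊆ M.carrier ∧ bdelta α M T = z}.Nonempty :=
      ⟨bdelta α M S, S, subset_rfl, hS, rfl⟩
    have hbdd : BddBelow {z : ℤ | ∃ T : Finset U, S ⊆ T ∧ ↑T ⊆ M.carrier ∧ bdelta α M T = z} := by
      refine ⟨0, ?_⟩
      rintro z ⟨T, _, hT, rfl⟩
      exact (hM T hT).2
    have hne' : {z : ℤ | ∃ T : Finset U, S ⊆ T ∧ ↑T ⊆ M'.carrier ∧ bdelta α M' T = z}.Nonempty :=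
      ⟨bdelta α M' S, S, subset_rfl, by rw [hc]; exact hS, rfl⟩
    have hbdd' : BddBelow {z : ℤ | ∃ T : Finset U, S ⊆ T ∧ ↑T ⊆ M'.carrier ∧ bdelta α M' T = z} := by
      refine ⟨c, ?_⟩
      rintro z ⟨T, hST, hT, rfl⟩
      rw [hc] at hT
      rw [key T (hZS.trans hST) hT]
      have := (hM T hT).2
      linarith
    have hmem := Int.csInf_mem hne hbdd
    have hmem' := Int.csInf_mem hne' hbdd'
    obtain ⟨T, hST, hT, hTeq⟩ := hmem
    obtain ⟨T', hST', hT', hT'eq⟩ := hmem'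
    rw [hc] at hT'
    have hle : dim α M' S ≤ dim α M S + c := by
      refine csInf_le hbdd' ⟨T, hST, by rw [hc]; exact hT, ?_⟩
      rw [key T (hZS.trans hST) hT, hTeq]; rfl
    have hge : dim α M S ≤ dim α M' S - c := by
      refine csInf_le hbdd ⟨T', hST', hT', ?_⟩
      have h3 := key T' (hZS.trans hST') hT'
      show bdelta α M T' = _
      unfold dim
      rw [hT'eq] at h3
      omega
    unfold dim at hle hge ⊢
    omega
  intro A hA
  have h1 := hdim (A ∪ Z) Finset.subset_union_right
    (by rw [Finset.coe_union]; exact Set.union_subset hA hZc)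
  have h2 := hdim Z subset_rfl hZc
  omega
end
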